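/- arXiv:2206.00395 — 6 statements merged into one kernel-verified Lean document; each statement's English description precedes it below -/
import Mathlib

section
/- Let ζ > 0, let K ≥ 2 be an integer, let η ∈ (0,1), and define f(x) = x²/2 and h(x) = (1/2)(x − ζ)² on ℝ. Define the naive-approach iterates by x⁰ = 0 and x^{t+1} = x^t − η f'(x^t) if K divides t, and x^{t+1} = x^t − η h'(x^t) otherwise (equivalently x^{t+1} = (1−η)x^t + ηζ·1[K ∤ t]). Then for every t ≥ 1, x^t = ζ · Σ_{i=0}^{t−1} η(1−η)^{t−1−i} · 1[K ∤ i] ≥ ζ · (1 − (1−η)^t − η/(1 − (1−η)^K)). Consequently, setting c := 1 − η/(1 − (1−η)^K), one has c > 0 and lim inf_{t→∞} |f'(x^t)|² ≥ c²ζ² > 0; in particular f and h are 1-smooth, satisfy Hessian similarity with δ = 0, are noise-free, yet the naive approach's squared gradients stay bounded below by a positive multiple of ζ². -/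
open Filter Finset

lemma mult_sum_le (p : ℝ) (hp0 : 0 ≤ p) (hp1 : p < 1) (K : ℕ) (hK : 1 ≤ K) (n : ℕ) :
    ∑ i ∈ (Finset.range (n+1)).filter (K ∣ ·), p ^ (n - i) ≤ 1 / (1 - p ^ K) := by
  have hq1 : p ^ K < 1 := pow_lt_one₀ hp0 hp1 (by omega)
  have hq0 : 0 ≤ p ^ K := pow_nonneg hp0 K
  set J := n / K with hJ
  have hset : (Finset.range (n+1)).filter (K ∣ ·) = (Finset.range (J+1)).image (· * K) := by
    ext i
    simp only [Finset.mem_filter, Finset.mem_range, Finset.mem_image]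
    constructor
    · rintro ⟨hi, j, rfl⟩
      exact ⟨j, by
        have hc : K * j = j * K := Nat.mul_comm K j
        have : j ≤ n / K := Nat.le_div_iff_mul_le (by omega) |>.2 (by omega)
        omega, by ring⟩
    · rintro ⟨j, hj, rfl⟩
      have hjK : j * K ≤ J * K := Nat.mul_le_mul_right K (by omega)
      have : J * K ≤ n := by rw [hJ]; exact Nat.div_mul_le_self n K
      exact ⟨by omega, ⟨j, by ring⟩⟩
  rw [hset, Finset.sum_image (by intro a _ b _ h; exact Nat.eq_of_mul_eq_mul_right (by omega) h)]
  have hbound : ∀ j ∈ Finset.range (J+1), p ^ (n - j * K) ≤ (p ^ K) ^ (J - j) := by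
    intro j hj
    simp only [Finset.mem_range] at hj
    rw [← pow_mul]
    apply pow_le_pow_of_le_one hp0 hp1.le
    have h1 : j * K ≤ J * K := Nat.mul_le_mul_right K (by omega)
    have h2 : J * K ≤ n := Nat.div_mul_le_self n K
    have h3 : K * (J - j) = J * K - j * K := by
      rw [Nat.mul_sub] ; ring_nf
    omega
  calc ∑ j ∈ Finset.range (J+1), p ^ (n - j * K)
      ≤ ∑ j ∈ Finset.range (J+1), (p ^ K) ^ (J - j) := Finset.sum_le_sum hbound
    _ = ∑ j ∈ Finset.range (J+1), (p ^ K) ^ j := by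
        rw [← Finset.sum_range_reflect]
        apply Finset.sum_congr rfl; intro j hj; simp only [Finset.mem_range] at hj
        congr 1; omega
    _ ≤ 1 / (1 - p ^ K) := by
        rw [le_div_iff₀ (by linarith)]
        have := geom_sum_mul (p ^ K) (J + 1)
        nlinarith [pow_nonneg hq0 (J+1)]


/-- lower bound for the naive approach on the toy pair
`f(x) = x²/2`, `h(x) = (x − ζ)²/2`: the iterates admit an explicit formula,
stay bounded below by `ζ(1 − (1−η)^t − η/(1−(1−η)^K))`, and with
`c = 1 − η/(1−(1−η)^K) > 0` the squared gradients `|f'(x^t)|² = |x^t|²`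
have liminf at least `c²ζ² > 0`. -/
theorem stmt_1 (ζ : ℝ) (hζ : 0 < ζ) (K : ℕ) (hK : 2 ≤ K)
    (η : ℝ) (hη0 : 0 < η) (hη1 : η < 1)
    (x : ℕ → ℝ) (hx0 : x 0 = 0)
    (hrec : ∀ t : ℕ, x (t + 1) =
      if K ∣ t then x t - η * x t else x t - η * (x t - ζ))
    (c : ℝ) (hc : c = 1 - η / (1 - (1 - η) ^ K)) :
    (∀ t : ℕ, 1 ≤ t →
        x t = ζ * ∑ i ∈ Finset.range t,
            η * (1 - η) ^ (t - 1 - i) * (if K ∣ i then 0 else 1) ∧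
        ζ * (1 - (1 - η) ^ t - η / (1 - (1 - η) ^ K)) ≤ x t) ∧
    0 < c ∧
    0 < c ^ 2 * ζ ^ 2 ∧
    c ^ 2 * ζ ^ 2 ≤ Filter.liminf (fun t : ℕ => |x t| ^ 2) Filter.atTop := by
  have hp0 : (0:ℝ) ≤ 1 - η := by linarith
  have hp1 : (1:ℝ) - η < 1 := by linarith
  have hq1 : (1 - η) ^ K < 1 := pow_lt_one₀ hp0 hp1 (by omega)
  have hqp : (1 - η) ^ K < 1 - η := by
    calc (1 - η) ^ K ≤ (1 - η) ^ 1 * (1 - η) ^ 1 := by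
          rw [← pow_add]
          exact pow_le_pow_of_le_one hp0 hp1.le (by omega)
      _ < 1 - η := by nlinarith
  have hD : 0 < 1 - (1 - η) ^ K := by linarith
  -- the explicit formula, for all t (also t = 0 where both sides are 0)
  have hform : ∀ t, x t = ζ * ∑ i ∈ Finset.range t,
      η * (1 - η) ^ (t - 1 - i) * (if K ∣ i then 0 else 1) := by
    intro t
    induction t with
    | zero => simp [hx0]
    | succ t ih =>
      have hstep : x (t + 1) = (1 - η) * x t + η * ζ * (if K ∣ t then 0 else 1) := by
        rw [hrec t]; split_ifs <;> ring
      rw [hstep, ih, Finset.sum_range_succ]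
      have : ∀ i ∈ Finset.range t,
          η * (1 - η) ^ (t + 1 - 1 - i) * (if K ∣ i then 0 else 1)
          = (1 - η) * (η * (1 - η) ^ (t - 1 - i) * (if K ∣ i then 0 else 1)) := by
        intro i hi
        simp only [Finset.mem_range] at hi
        have : t + 1 - 1 - i = (t - 1 - i) + 1 := by omega
        rw [this, pow_succ]; ring
      rw [Finset.sum_congr rfl this]
      simp only [Nat.add_sub_cancel, Nat.sub_self, pow_zero]
      rw [← Finset.mul_sum]
      ring
  have hfull : ∀ t : ℕ, ∑ i ∈ Finset.range t, η * (1 - η) ^ (t - 1 - i)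
      = 1 - (1 - η) ^ t := by
    intro t
    rw [← Finset.mul_sum]
    have h1 : ∑ i ∈ Finset.range t, (1 - η) ^ (t - 1 - i)
        = ∑ i ∈ Finset.range t, (1 - η) ^ i := by
      rw [← Finset.sum_range_reflect]
      apply Finset.sum_congr rfl; intro i hi
      simp only [Finset.mem_range] at hi
      congr 1; omega
    rw [h1]
    have := geom_sum_mul (1 - η) t
    nlinarith [this]
  have hSbound : ∀ t : ℕ,
      0 ≤ (∑ i ∈ Finset.range t, η * (1 - η) ^ (t - 1 - i) * (if K ∣ i then 0 else 1)) ∧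
      (∑ i ∈ Finset.range t, η * (1 - η) ^ (t - 1 - i) * (if K ∣ i then 0 else 1)) ≤ 1 := by
    intro t
    constructor
    · apply Finset.sum_nonneg
      intro i _
      split_ifs <;> positivity
    · calc (∑ i ∈ Finset.range t, η * (1 - η) ^ (t - 1 - i) * (if K ∣ i then 0 else 1))
          ≤ ∑ i ∈ Finset.range t, η * (1 - η) ^ (t - 1 - i) := by
            apply Finset.sum_le_sum
            intro i _
            split_ifs <;> nlinarith [pow_nonneg hp0 (t - 1 - i)]
        _ = 1 - (1 - η) ^ t := hfull t
        _ ≤ 1 := by nlinarith [pow_nonneg hp0 t]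
  -- the lower bound
  have hlow : ∀ t : ℕ, 1 ≤ t →
      ζ * (1 - (1 - η) ^ t - η / (1 - (1 - η) ^ K)) ≤ x t := by
    intro t ht
    rw [hform t]
    apply mul_le_mul_of_nonneg_left _ hζ.le
    obtain ⟨n, rfl⟩ : ∃ n, t = n + 1 := ⟨t - 1, by omega⟩
    simp only [Nat.add_sub_cancel]
    have hsplit : ∑ i ∈ Finset.range (n+1),
        η * (1 - η) ^ (n - i) * (if K ∣ i then 0 else 1)
        = (∑ i ∈ Finset.range (n+1), η * (1 - η) ^ (n - i))
          - η * ∑ i ∈ (Finset.range (n+1)).filter (K ∣ ·), (1 - η) ^ (n - i) := by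
      rw [Finset.mul_sum, Finset.sum_filter, ← Finset.sum_sub_distrib]
      apply Finset.sum_congr rfl
      intro i _
      split_ifs <;> ring
    rw [hsplit]
    have hgeom : ∑ i ∈ Finset.range (n+1), η * (1 - η) ^ (n - i)
        = 1 - (1 - η) ^ (n+1) := by
      have := hfull (n+1)
      simpa using this
    rw [hgeom]
    have hkey := mult_sum_le (1 - η) hp0 hp1 K (by omega) n
    have : η * ∑ i ∈ (Finset.range (n+1)).filter (K ∣ ·), (1 - η) ^ (n - i)
        ≤ η * (1 / (1 - (1 - η) ^ K)) := mul_le_mul_of_nonneg_left hkey hη0.le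
    have heq : η * (1 / (1 - (1 - η) ^ K)) = η / (1 - (1 - η) ^ K) := by ring
    linarith [heq ▸ this]
  have hc0 : 0 < c := by
    rw [hc]
    rw [sub_pos, div_lt_one hD]
    linarith
  refine ⟨fun t ht => ⟨hform t, hlow t ht⟩, hc0, by positivity, ?_⟩
  -- liminf bound
  set g : ℕ → ℝ := fun t => ζ ^ 2 * (max (c - (1 - η) ^ t) 0) ^ 2 with hg
  have hgle : ∀ᶠ t in atTop, g t ≤ |x t| ^ 2 := by
    filter_upwards [eventually_ge_atTop 1] with t ht
    rcases le_or_gt (c - (1 - η) ^ t) 0 with h | h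
    · have hg0 : g t = 0 := by simp [hg, max_eq_right h]
      rw [hg0]; positivity
    · have hxt : ζ * (c - (1 - η) ^ t) ≤ x t := by
        have := hlow t ht
        rw [hc] at *
        linarith [this]
      have h1 : 0 ≤ ζ * (c - (1 - η) ^ t) := by positivity
      have h2 : ζ * (c - (1 - η) ^ t) ≤ |x t| := le_trans hxt (le_abs_self _)
      have := pow_le_pow_left₀ h1 h2 2
      simp only [hg, max_eq_left h.le]
      nlinarith [this]
  have hgtend : Tendsto g atTop (nhds (c ^ 2 * ζ ^ 2)) := by
    have hp : Tendsto (fun t : ℕ => (1 - η) ^ t) atTop (nhds 0) := by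
      apply tendsto_pow_atTop_nhds_zero_of_lt_one hp0 hp1
    have h1 : Tendsto (fun t : ℕ => c - (1 - η) ^ t) atTop (nhds c) := by
      simpa using tendsto_const_nhds.sub hp
    have h2 : Tendsto (fun t : ℕ => max (c - (1 - η) ^ t) 0) atTop (nhds c) := by
      have := h1.max (tendsto_const_nhds (x := (0:ℝ)))
      simpa [max_eq_left hc0.le] using this
    have h3 : Tendsto g atTop (nhds (ζ ^ 2 * c ^ 2)) :=
      tendsto_const_nhds.mul (h2.pow 2)
    convert h3 using 2
    ring
  have hbddg : IsBoundedUnder (· ≥ ·) atTop g := hgtend.isBoundedUnder_ge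
  have hxb : ∀ t : ℕ, |x t| ^ 2 ≤ ζ ^ 2 := by
    intro t
    obtain ⟨hS0, hS1⟩ := hSbound t
    rw [hform t, abs_mul, abs_of_pos hζ, abs_of_nonneg hS0]
    have h2 : (∑ i ∈ Finset.range t, η * (1 - η) ^ (t - 1 - i) * (if K ∣ i then 0 else 1)) ^ 2 ≤ 1 := by
      nlinarith
    nlinarith [sq_nonneg ζ, mul_pow ζ (∑ i ∈ Finset.range t, η * (1 - η) ^ (t - 1 - i) * (if K ∣ i then 0 else 1)) 2]
  have hbddx : IsCoboundedUnder (· ≥ ·) atTop (fun t : ℕ => |x t| ^ 2) :=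
    Filter.IsBoundedUnder.isCoboundedUnder_ge
      ⟨ζ ^ 2, Filter.eventually_map.2 (Filter.Eventually.of_forall hxb)⟩
  calc c ^ 2 * ζ ^ 2 = liminf g atTop := (hgtend.liminf_eq).symm
    _ ≤ liminf (fun t : ℕ => |x t| ^ 2) atTop := liminf_le_liminf hgle hbddg hbddx
end

section
/- Let f : ℝ^d → ℝ be L-smooth and bounded below by f*, and let h : ℝ^d → ℝ be differentiable such that for some m ∈ [0,1) and ζ ≥ 0, ‖∇f(x) − ∇h(x)‖² ≤ m‖∇f(x)‖² + ζ² for all x ∈ ℝ^d. Fix integers K ≥ 1, T ≥ 1, a step size 0 < η ≤ 1/L, and an initial point x⁰. Define the naive iterates: for t = 1,…,T set y^t_0 = x^{t−1}, y^t_1 = y^t_0 − η∇f(y^t_0), y^t_k = y^t_{k−1} − η∇h(y^t_{k−1}) for k = 2,…,K, and x^t = y^t_K. Then (1/(2KT)) Σ_{t=1}^T ‖∇f(x^{t−1})‖² + ((1−m)/(2KT)) Σ_{t=1}^T Σ_{k=2}^K ‖∇f(y^t_{k−1})‖² ≤ (f(x⁰) − f*)/(KTη) + ((K−1)/K)·ζ².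 -/
/-!
By `L`-smoothness and `η L ≤ 1`, a step `x ↦ x - η g` along any direction `g` decreases `f` by
at least `η/2 (‖∇f x‖² - ‖∇f x - g‖²)`; under the bias assumption on `g = ∇h` this is at least
`η/2 ((1 - m) ‖∇f x‖² - ζ²)`, and for the exact first step `g = ∇f x` it is `η/2 ‖∇f x‖²`.
Telescoping over the `K` steps of a round and then over the `T` rounds bounds the sum of these
decreases by `f x⁰ - f*`; dividing by `K T η` gives the claim.
-/

open Finset

theorem sum_Ioc_le_sub_of_le_sub {α : Type*} [AddCommGroup α] [PartialOrder α]
    [IsOrderedAddMonoid α] {u d : ℕ → α} {a b : ℕ} (hab : a ≤ b)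
    (h : ∀ k ∈ Ioc a b, d k ≤ u (k - 1) - u k) :
    ∑ k ∈ Ioc a b, d k ≤ u a - u b := by
  induction b, hab using Nat.le_induction with
  | base => simp
  | succ b hab ih =>
    rw [sum_Ioc_succ_top hab]
    calc ∑ k ∈ Ioc a b, d k + d (b + 1) ≤ (u a - u b) + (u b - u (b + 1)) :=
          add_le_add (ih fun k hk => h k (Ioc_subset_Ioc_right b.le_succ hk))
            (by simpa using h (b + 1) (right_mem_Ioc.mpr (Nat.lt_succ_of_le hab)))
      _ = u a - u (b + 1) := sub_add_sub_cancel _ _ _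

section Descent

open InnerProductSpace

variable {F : Type*} [NormedAddCommGroup F] [InnerProductSpace ℝ F] [CompleteSpace F]

theorem image_add_le_of_norm_gradient_sub_le {f : F → ℝ} {L : ℝ} (hfd : Differentiable ℝ f)
    (hsmooth : ∀ x y : F, ‖gradient f x - gradient f y‖ ≤ L * ‖x - y‖) (x v : F) :
    f (x + v) ≤ f x + inner ℝ (gradient f x) v + L / 2 * ‖v‖ ^ 2 := by
  set φ : ℝ → ℝ := fun t => f (x + t • v) - t * inner ℝ (gradient f x) v - L / 2 * t ^ 2 * ‖v‖ ^ 2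
  have hφ : ∀ t, HasDerivAt φ
      (inner ℝ (gradient f (x + t • v)) v - inner ℝ (gradient f x) v - L * t * ‖v‖ ^ 2) t := by
    intro t
    have hline : HasDerivAt (fun s : ℝ => x + s • v) v t := by
      simpa using ((hasDerivAt_id t).smul_const v).const_add x
    have hf := ((hfd _).hasGradientAt.hasFDerivAt).comp_hasDerivAt t hline
    rw [toDual_apply_apply] at hf
    refine ((hf.sub ((hasDerivAt_id t).mul_const (inner ℝ (gradient f x) v))).sub
      (((hasDerivAt_pow 2 t).const_mul (L / 2)).mul_const (‖v‖ ^ 2))).congr_deriv ?_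
    simp only [Nat.cast_ofNat]
    ring
  have hφ' : ∀ t ∈ interior (Set.Ici (0 : ℝ)),
      inner ℝ (gradient f (x + t • v)) v - inner ℝ (gradient f x) v - L * t * ‖v‖ ^ 2 ≤ 0 := by
    intro t ht
    rw [interior_Ici, Set.mem_Ioi] at ht
    have hlip : ‖gradient f (x + t • v) - gradient f x‖ ≤ L * (t * ‖v‖) := by
      simpa [norm_smul, abs_of_pos ht] using hsmooth (x + t • v) x
    rw [sub_nonpos]
    calc inner ℝ (gradient f (x + t • v)) v - inner ℝ (gradient f x) v
        = inner ℝ (gradient f (x + t • v) - gradient f x) v := (inner_sub_left _ _ _).symm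
      _ ≤ ‖gradient f (x + t • v) - gradient f x‖ * ‖v‖ := real_inner_le_norm _ _
      _ ≤ L * (t * ‖v‖) * ‖v‖ := by gcongr
      _ = L * t * ‖v‖ ^ 2 := by ring
  have hanti : AntitoneOn φ (Set.Ici 0) :=
    antitoneOn_of_hasDerivWithinAt_nonpos (convex_Ici 0)
      (fun t _ => (hφ t).continuousAt.continuousWithinAt)
      (fun t _ => (hφ t).hasDerivWithinAt) hφ'
  have := hanti (Set.mem_Ici.mpr le_rfl) (show (1 : ℝ) ∈ Set.Ici 0 by norm_num) zero_le_one
  simp only [φ, zero_smul, add_zero, one_smul, zero_mul, sub_zero, one_pow, mul_one, one_mul,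
    zero_pow two_ne_zero, mul_zero] at this
  linarith

theorem image_sub_smul_le {f : F → ℝ} {L η : ℝ} (hfd : Differentiable ℝ f)
    (hsmooth : ∀ x y : F, ‖gradient f x - gradient f y‖ ≤ L * ‖x - y‖)
    (hη : 0 ≤ η) (hηL : η * L ≤ 1) (x g : F) :
    f (x - η • g) ≤ f x - η / 2 * (‖gradient f x‖ ^ 2 - ‖gradient f x - g‖ ^ 2) := by
  have hdesc := image_add_le_of_norm_gradient_sub_le hfd hsmooth x (-(η • g))
  rw [← sub_eq_add_neg, inner_neg_right, real_inner_smul_right, norm_neg, norm_smul,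
    Real.norm_of_nonneg hη] at hdesc
  have hstep : L / 2 * (η * ‖g‖) ^ 2 ≤ η / 2 * ‖g‖ ^ 2 := by
    have : η * (η * L) ≤ η := mul_le_of_le_one_right hη hηL
    nlinarith [sq_nonneg ‖g‖]
  -- `-η ⟪a, g⟫ + η/2 ‖g‖² = -η/2 (‖a‖² - ‖a - g‖²)` with `a = ∇f x`
  nlinarith [norm_sub_sq_real (gradient f x) g]

theorem image_sub_smul_le_of_norm_sq_bias_le {f : F → ℝ} {L η m ζ : ℝ}
    (hfd : Differentiable ℝ f)
    (hsmooth : ∀ x y : F, ‖gradient f x - gradient f y‖ ≤ L * ‖x - y‖)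
    (hη : 0 ≤ η) (hηL : η * L ≤ 1) {x g : F}
    (hbias : ‖gradient f x - g‖ ^ 2 ≤ m * ‖gradient f x‖ ^ 2 + ζ ^ 2) :
    η / 2 * ((1 - m) * ‖gradient f x‖ ^ 2 - ζ ^ 2) ≤ f x - f (x - η • g) := by
  have := image_sub_smul_le hfd hsmooth hη hηL x g
  nlinarith [mul_le_mul_of_nonneg_left hbias (div_nonneg hη zero_le_two)]

theorem naive_epoch_descent {f : F → ℝ} {g : F → F} {L η m ζ : ℝ}
    (hfd : Differentiable ℝ f)
    (hsmooth : ∀ x y : F, ‖gradient f x - gradient f y‖ ≤ L * ‖x - y‖)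
    (hη : 0 ≤ η) (hηL : η * L ≤ 1)
    (hbias : ∀ x, ‖gradient f x - g x‖ ^ 2 ≤ m * ‖gradient f x‖ ^ 2 + ζ ^ 2)
    {K : ℕ} (hK : 1 ≤ K) {y : ℕ → F} (hy1 : y 1 = y 0 - η • gradient f (y 0))
    (hyk : ∀ k, 2 ≤ k → k ≤ K → y k = y (k - 1) - η • g (y (k - 1))) :
    η / 2 * ‖gradient f (y 0)‖ ^ 2
        + ∑ k ∈ Icc 2 K, η / 2 * ((1 - m) * ‖gradient f (y (k - 1))‖ ^ 2 - ζ ^ 2)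
      ≤ f (y 0) - f (y K) := by
  have hfirst : η / 2 * ‖gradient f (y 0)‖ ^ 2 ≤ f (y 0) - f (y 1) := by
    simpa [hy1, le_sub_comm] using image_sub_smul_le hfd hsmooth hη hηL (y 0) (gradient f (y 0))
  have hrest : ∑ k ∈ Icc 2 K, η / 2 * ((1 - m) * ‖gradient f (y (k - 1))‖ ^ 2 - ζ ^ 2)
      ≤ f (y 1) - f (y K) := by
    rw [show Icc 2 K = Ioc 1 K from Icc_add_one_left_eq_Ioc 1 K]
    refine sum_Ioc_le_sub_of_le_sub (u := fun k => f (y k)) hK fun k hk => ?_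
    rw [hyk k (mem_Ioc.mp hk).1 (mem_Ioc.mp hk).2]
    exact image_sub_smul_le_of_norm_sq_bias_le hfd hsmooth hη hηL (hbias _)
  linarith

end Descent

theorem average_le_of_weighted_sum_le {A B C m ζ η : ℝ} {K T : ℕ} (hK : 1 ≤ K) (hT : 1 ≤ T)
    (hη : 0 < η) (h : η / 2 * A + η / 2 * (1 - m) * B - T * (K - 1) * (η / 2 * ζ ^ 2) ≤ C) :
    1 / (2 * K * T) * A + (1 - m) / (2 * K * T) * B
      ≤ C / (K * T * η) + ((K : ℝ) - 1) / K * ζ ^ 2 := by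
  have hK' : (1 : ℝ) ≤ K := by exact_mod_cast hK
  have hT' : (1 : ℝ) ≤ T := by exact_mod_cast hT
  have hscale : 1 / (2 * K * T) * A + (1 - m) / (2 * K * T) * B
      = (η / 2 * A + η / 2 * (1 - m) * B) / (K * T * η) := by
    field_simp
  rw [hscale, div_le_iff₀ (by positivity)]
  calc η / 2 * A + η / 2 * (1 - m) * B
      ≤ C + T * (K - 1) * (η / 2 * ζ ^ 2) := by linarith
    _ ≤ C + (K - 1) * T * η * ζ ^ 2 := by
        linarith [mul_nonneg (mul_nonneg (sub_nonneg.mpr hK') (by linarith : (0 : ℝ) ≤ T))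
          (mul_nonneg hη.le (sq_nonneg ζ))]
    _ = (C / (K * T * η) + ((K : ℝ) - 1) / K * ζ ^ 2) * (K * T * η) := by
        field_simp

theorem stmt_2_general {d : ℕ} (f h : EuclideanSpace ℝ (Fin d) → ℝ)
    (L fstar m ζ : ℝ) (hL : 0 < L)
    (hfd : Differentiable ℝ f)
    (hsmooth : ∀ x y : EuclideanSpace ℝ (Fin d),
      ‖gradient f x - gradient f y‖ ≤ L * ‖x - y‖)
    (hfbdd : ∀ x, fstar ≤ f x)
    (hbias : ∀ x : EuclideanSpace ℝ (Fin d),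
      ‖gradient f x - gradient h x‖ ^ 2 ≤ m * ‖gradient f x‖ ^ 2 + ζ ^ 2)
    (K T : ℕ) (hK : 1 ≤ K) (hT : 1 ≤ T)
    (η : ℝ) (hη0 : 0 < η) (hηL : η ≤ 1 / L)
    (x : ℕ → EuclideanSpace ℝ (Fin d))
    (y : ℕ → ℕ → EuclideanSpace ℝ (Fin d))
    (hy0 : ∀ t, 1 ≤ t → y t 0 = x (t - 1))
    (hy1 : ∀ t, 1 ≤ t → y t 1 = y t 0 - η • gradient f (y t 0))
    (hyk : ∀ t, 1 ≤ t → ∀ k, 2 ≤ k → k ≤ K →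
      y t k = y t (k - 1) - η • gradient h (y t (k - 1)))
    (hx : ∀ t, 1 ≤ t → x t = y t K) :
    (1 / (2 * K * T)) * ∑ t ∈ Finset.Icc 1 T, ‖gradient f (x (t - 1))‖ ^ 2
      + ((1 - m) / (2 * K * T)) *
          ∑ t ∈ Finset.Icc 1 T, ∑ k ∈ Finset.Icc 2 K, ‖gradient f (y t (k - 1))‖ ^ 2
    ≤ (f (x 0) - fstar) / (K * T * η) + (((K : ℝ) - 1) / K) * ζ ^ 2 := by
  have hηL' : η * L ≤ 1 := (le_div_iff₀ hL).mp hηL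
  have htotal : ∑ t ∈ Icc 1 T, (η / 2 * ‖gradient f (x (t - 1))‖ ^ 2
      + ∑ k ∈ Icc 2 K, η / 2 * ((1 - m) * ‖gradient f (y t (k - 1))‖ ^ 2 - ζ ^ 2))
      ≤ f (x 0) - fstar := by
    rw [show Icc 1 T = Ioc 0 T from Icc_add_one_left_eq_Ioc 0 T]
    refine (sum_Ioc_le_sub_of_le_sub (u := fun t => f (x t)) T.zero_le fun t ht => ?_).trans
      (sub_le_sub_left (hfbdd (x T)) _)
    have ht1 : 1 ≤ t := (mem_Ioc.mp ht).1
    rw [hx t ht1, ← hy0 t ht1]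
    exact naive_epoch_descent hfd hsmooth hη0.le hηL' hbias hK (hy1 t ht1) (hyk t ht1)
  set A := ∑ t ∈ Icc 1 T, ‖gradient f (x (t - 1))‖ ^ 2
  set B := ∑ t ∈ Icc 1 T, ∑ k ∈ Icc 2 K, ‖gradient f (y t (k - 1))‖ ^ 2
  have hexpand : ∑ t ∈ Icc 1 T, (η / 2 * ‖gradient f (x (t - 1))‖ ^ 2
      + ∑ k ∈ Icc 2 K, η / 2 * ((1 - m) * ‖gradient f (y t (k - 1))‖ ^ 2 - ζ ^ 2))
      = η / 2 * A + η / 2 * (1 - m) * B - T * (K - 1) * (η / 2 * ζ ^ 2) := by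
    simp only [sum_add_distrib, mul_sub, sum_sub_distrib, ← mul_sum, sum_const, Nat.card_Icc,
      nsmul_eq_mul, A, B]
    push_cast [Nat.cast_sub hK]
    ring
  rw [hexpand] at htotal
  exact average_le_of_weighted_sum_le hK hT hη0 htotal

/-- convergence bound for the naive approach under the
`(m, ζ²)`-bounded gradient bias assumption. -/
theorem stmt_2 {d : ℕ} (f h : EuclideanSpace ℝ (Fin d) → ℝ)
    (L fstar m ζ : ℝ) (hL : 0 < L)
    (hfd : Differentiable ℝ f)
    (hsmooth : ∀ x y : EuclideanSpace ℝ (Fin d),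
      ‖gradient f x - gradient f y‖ ≤ L * ‖x - y‖)
    (hfbdd : ∀ x, fstar ≤ f x)
    (hhd : Differentiable ℝ h)
    (hm0 : 0 ≤ m) (hm1 : m < 1) (hζ : 0 ≤ ζ)
    (hbias : ∀ x : EuclideanSpace ℝ (Fin d),
      ‖gradient f x - gradient h x‖ ^ 2 ≤ m * ‖gradient f x‖ ^ 2 + ζ ^ 2)
    (K T : ℕ) (hK : 1 ≤ K) (hT : 1 ≤ T)
    (η : ℝ) (hη0 : 0 < η) (hηL : η ≤ 1 / L)
    (x : ℕ → EuclideanSpace ℝ (Fin d))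
    (y : ℕ → ℕ → EuclideanSpace ℝ (Fin d))
    (hy0 : ∀ t, 1 ≤ t → y t 0 = x (t - 1))
    (hy1 : ∀ t, 1 ≤ t → y t 1 = y t 0 - η • gradient f (y t 0))
    (hyk : ∀ t, 1 ≤ t → ∀ k, 2 ≤ k → k ≤ K →
      y t k = y t (k - 1) - η • gradient h (y t (k - 1)))
    (hx : ∀ t, 1 ≤ t → x t = y t K) :
    (1 / (2 * K * T)) * ∑ t ∈ Finset.Icc 1 T, ‖gradient f (x (t - 1))‖ ^ 2
      + ((1 - m) / (2 * K * T)) *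
          ∑ t ∈ Finset.Icc 1 T, ∑ k ∈ Finset.Icc 2 K, ‖gradient f (y t (k - 1))‖ ^ 2
    ≤ (f (x 0) - fstar) / (K * T * η) + (((K : ℝ) - 1) / K) * ζ ^ 2 :=
  stmt_2_general f h L fstar m ζ hL hfd hsmooth hfbdd hbias K T hK hT η hη0 hηL x y hy0 hy1 hyk hx
end

section
/- Let f : ℝ^d → ℝ be L-smooth, and let f, h be twice continuously differentiable and satisfy δ-Hessian similarity with δ > 0. Let K ≥ 1 be an integer, let 1 ≤ k ≤ K, and let 0 < η ≤ min(1/L, 1/(192δK)). Let x, y, m ∈ ℝ^d, set e = m − ∇f(x) + ∇h(x) and y⁺ = y − η(∇h(y) + m). Then f(y⁺) + δ(1 + 2/K)^{K−k}‖y⁺ − x‖² ≤ f(y) + δ(1 + 2/K)^{K−k+1}‖y − x‖² − (η/4)‖∇f(y)‖² + 2η‖e‖². -/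
/-!
With `g = ∇h(y) + m`, the descent lemma for the `L`-smooth `f` and `ηL ≤ 1` give
`f(y⁺) ≤ f(y) - (η/2)‖∇f(y)‖² + (η/2)‖g - ∇f(y)‖²`. Hessian similarity makes `∇f - ∇h`
`δ`-Lipschitz, and `g - ∇f(y) = e - ((∇f - ∇h)(y) - (∇f - ∇h)(x))`, so
`‖g - ∇f(y)‖ ≤ δ‖y - x‖ + ‖e‖`. Young's inequality gives
`‖y⁺ - x‖² ≤ (1 + 1/K)‖y - x‖² + (1 + K)η²‖g‖²`. Since `c = (1 + 2/K)^(K-k) ≤ exp 2 < 8`, the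
surplus `δc‖y - x‖²/K` of the larger weight `c(1 + 2/K)` over `c(1 + 1/K)`, together with
`(η/4)‖∇f(y)‖²` and `2η‖e‖²`, absorbs all error terms once `192ηδK ≤ 1`.
-/

open scoped RealInnerProductSpace

theorem norm_fderiv_sub_le_of_norm_iteratedFDeriv_two_le {E F : Type*} [NormedAddCommGroup E]
    [NormedSpace ℝ E] [NormedAddCommGroup F] [NormedSpace ℝ F] {φ : E → F} {δ : ℝ}
    (hφ : ContDiff ℝ 2 φ)
    (hbound : ∀ z, ‖iteratedFDeriv ℝ 2 φ z‖ ≤ δ) (x y : E) :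
    ‖fderiv ℝ φ y - fderiv ℝ φ x‖ ≤ δ * ‖y - x‖ := by
  refine convex_univ.norm_image_sub_le_of_norm_fderiv_le
    (fun z _ ↦ (hφ.fderiv_right le_rfl).differentiable one_ne_zero z) (fun z _ ↦ ?_)
    (Set.mem_univ x) (Set.mem_univ y)
  rw [← norm_iteratedFDeriv_one, norm_iteratedFDeriv_fderiv]
  exact hbound z

section Gradient

variable {E : Type*} [NormedAddCommGroup E] [InnerProductSpace ℝ E] [CompleteSpace E]

theorem gradient_sub_apply {f h : E → ℝ} {x : E} (hf : DifferentiableAt ℝ f x)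
    (hh : DifferentiableAt ℝ h x) : gradient (f - h) x = gradient f x - gradient h x := by
  simp only [gradient, fderiv_sub hf hh, map_sub]

theorem norm_gradient_sub_gradient (f : E → ℝ) (x y : E) :
    ‖gradient f y - gradient f x‖ = ‖fderiv ℝ f y - fderiv ℝ f x‖ := by
  rw [gradient, gradient, ← map_sub, LinearIsometryEquiv.norm_map]

theorem norm_gradient_sub_sub_le_of_hessian_similarity {f h : E → ℝ} {δ : ℝ}
    (hf : ContDiff ℝ 2 f) (hh : ContDiff ℝ 2 h)
    (hsim : ∀ z, ‖iteratedFDeriv ℝ 2 f z - iteratedFDeriv ℝ 2 h z‖ ≤ δ) (x y : E) :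
    ‖(gradient f y - gradient h y) - (gradient f x - gradient h x)‖ ≤ δ * ‖y - x‖ := by
  have hdiff : ∀ z, gradient (f - h) z = gradient f z - gradient h z := fun z ↦
    gradient_sub_apply (hf.differentiable two_ne_zero z) (hh.differentiable two_ne_zero z)
  rw [← hdiff, ← hdiff, norm_gradient_sub_gradient]
  refine norm_fderiv_sub_le_of_norm_iteratedFDeriv_two_le (hf.sub hh) (fun z ↦ ?_) x y
  rw [show (fun x ↦ f x - h x) = f - h from rfl, iteratedFDeriv_sub hf hh]
  exact hsim z

theorem norm_add_sub_gradient_le_of_hessian_similarity {f h : E → ℝ} {δ : ℝ}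
    (hf : ContDiff ℝ 2 f) (hh : ContDiff ℝ 2 h)
    (hsim : ∀ z, ‖iteratedFDeriv ℝ 2 f z - iteratedFDeriv ℝ 2 h z‖ ≤ δ) (x y m : E) :
    ‖(gradient h y + m) - gradient f y‖
      ≤ δ * ‖y - x‖ + ‖m - gradient f x + gradient h x‖ := by
  calc ‖(gradient h y + m) - gradient f y‖
      = ‖(m - gradient f x + gradient h x)
          - ((gradient f y - gradient h y) - (gradient f x - gradient h x))‖ := by
        congr 1; abel
    _ ≤ δ * ‖y - x‖ + ‖m - gradient f x + gradient h x‖ :=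
        (norm_sub_le _ _).trans <| by
          linarith [norm_gradient_sub_sub_le_of_hessian_similarity hf hh hsim x y]

theorem image_add_le_of_gradient_lipschitz {f : E → ℝ} {L : ℝ} (hfd : Differentiable ℝ f)
    (hsmooth : ∀ x y, ‖gradient f x - gradient f y‖ ≤ L * ‖x - y‖) (y v : E) :
    f (y + v) ≤ f y + ⟪gradient f y, v⟫ + L / 2 * ‖v‖ ^ 2 := by
  set φ : ℝ → ℝ := fun t ↦ f (y + t • v) - t * ⟪gradient f y, v⟫ - t ^ 2 * (L / 2 * ‖v‖ ^ 2)
  have hφ : ∀ t : ℝ, HasDerivAt φ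
      (⟪gradient f (y + t • v) - gradient f y, v⟫ - t * (L * ‖v‖ ^ 2)) t := by
    intro t
    have hline : HasDerivAt (fun t : ℝ ↦ y + t • v) v t := by
      simpa using ((hasDerivAt_id t).smul_const v).const_add y
    have hf := (hfd (y + t • v)).hasFDerivAt.comp_hasDerivAt t hline
    rw [← inner_gradient_left] at hf
    refine ((hf.sub (hasDerivAt_mul_const _)).sub
      ((hasDerivAt_pow 2 t).mul_const (L / 2 * ‖v‖ ^ 2))).congr_deriv ?_
    rw [inner_sub_left]
    push_cast
    ring
  have hanti : AntitoneOn φ (Set.Ici 0) := by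
    refine antitoneOn_of_deriv_nonpos (convex_Ici 0)
      (fun t _ ↦ (hφ t).continuousAt.continuousWithinAt)
      (fun t _ ↦ (hφ t).differentiableAt.differentiableWithinAt) fun t ht ↦ ?_
    rw [interior_Ici, Set.mem_Ioi] at ht
    have hlip := hsmooth (y + t • v) y
    rw [add_sub_cancel_left, norm_smul, Real.norm_of_nonneg ht.le] at hlip
    rw [(hφ t).deriv, sub_nonpos]
    calc ⟪gradient f (y + t • v) - gradient f y, v⟫
        ≤ ‖gradient f (y + t • v) - gradient f y‖ * ‖v‖ := real_inner_le_norm _ _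
      _ ≤ L * (t * ‖v‖) * ‖v‖ := by gcongr
      _ = t * (L * ‖v‖ ^ 2) := by ring
  have h01 := hanti (Set.mem_Ici.mpr le_rfl) (Set.mem_Ici.mpr zero_le_one) zero_le_one
  simp only [φ, one_smul, zero_smul, add_zero, one_pow, one_mul, zero_mul, sub_zero,
    zero_pow two_ne_zero] at h01
  linarith

theorem image_sub_smul_le_of_gradient_lipschitz {f : E → ℝ} {L η : ℝ} (hfd : Differentiable ℝ f)
    (hsmooth : ∀ x y, ‖gradient f x - gradient f y‖ ≤ L * ‖x - y‖) (hη : 0 ≤ η)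
    (hLη : η * L ≤ 1) (y g : E) :
    f (y - η • g) ≤ f y - η / 2 * ‖gradient f y‖ ^ 2 + η / 2 * ‖g - gradient f y‖ ^ 2 := by
  have hdesc := image_add_le_of_gradient_lipschitz hfd hsmooth y (-(η • g))
  rw [← sub_eq_add_neg, inner_neg_right, real_inner_smul_right, norm_neg, norm_smul,
    Real.norm_of_nonneg hη] at hdesc
  have hsq := norm_sub_sq_real g (gradient f y)
  have hLη' : η * L * (η * ‖g‖ ^ 2) ≤ 1 * (η * ‖g‖ ^ 2) := by gcongr
  rw [real_inner_comm] at hsq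
  linear_combination hdesc + hLη' / 2 - η / 2 * hsq

end Gradient

theorem norm_add_sq_le_one_add_inv_mul_add {E : Type*} [SeminormedAddCommGroup E] {K : ℝ}
    (hK : 0 < K) (u v : E) :
    ‖u + v‖ ^ 2 ≤ (1 + 1 / K) * ‖u‖ ^ 2 + (1 + K) * ‖v‖ ^ 2 := by
  have hgap : (1 + 1 / K) * ‖u‖ ^ 2 + (1 + K) * ‖v‖ ^ 2 - (‖u‖ + ‖v‖) ^ 2
      = (‖u‖ - K * ‖v‖) ^ 2 / K := by
    field_simp
    ring
  have : ‖u + v‖ ^ 2 ≤ (‖u‖ + ‖v‖) ^ 2 := by gcongr; exact norm_add_le u v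
  linarith [div_nonneg (sq_nonneg (‖u‖ - K * ‖v‖)) hK.le]

theorem one_add_two_div_pow_le_exp_two {n j : ℕ} (hj : j ≤ n) :
    (1 + 2 / (n : ℝ)) ^ j ≤ Real.exp 2 := by
  have hbase : (1 : ℝ) ≤ 1 + 2 / n := le_add_of_nonneg_right (by positivity)
  calc (1 + 2 / (n : ℝ)) ^ j ≤ (1 + 2 / n) ^ n := pow_le_pow_right₀ hbase hj
    _ = (1 - (-2) / n) ^ n := by ring
    _ ≤ Real.exp (- -2) :=
        Real.one_sub_div_pow_le_exp_neg (by linarith [(n.cast_nonneg : (0 : ℝ) ≤ n)])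
    _ = Real.exp 2 := by rw [neg_neg]

theorem exp_two_lt_eight : Real.exp 2 < 8 := by
  have h := Real.exp_one_lt_d9
  rw [show (2 : ℝ) = 1 + 1 by norm_num, Real.exp_add]
  nlinarith [Real.exp_pos 1]

theorem error_terms_le_potential_slack {η δ K c₁ a c r : ℝ} (hη : 0 ≤ η) (hδ : 0 ≤ δ)
    (hK : 1 ≤ K) (hηδK : η * (192 * δ * K) ≤ 1) (hc₁ : 1 ≤ c₁) (hc₁8 : c₁ ≤ 8) :
    η / 2 * (δ * r + c) ^ 2 + δ * c₁ * (1 + K) * η ^ 2 * (a + δ * r + c) ^ 2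
      ≤ δ * c₁ * r ^ 2 / K + η / 4 * a ^ 2 + 2 * η * c ^ 2 := by
  have hK0 : 0 < K := zero_lt_one.trans_le hK
  have hcoef : δ * c₁ * (1 + K) * η ^ 2 ≤ η / 12 := by
    have : c₁ * (1 + K) ≤ 16 * K := by nlinarith
    have : δ * η ^ 2 * (c₁ * (1 + K)) ≤ δ * η ^ 2 * (16 * K) := by gcongr
    nlinarith
  have hdrift : 5 / 4 * η * (δ * r) ^ 2 ≤ δ * c₁ * r ^ 2 / K := by
    rw [le_div_iff₀ hK0]
    have : δ * r ^ 2 * (η * (192 * δ * K)) ≤ δ * r ^ 2 * 1 := by gcongr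
    have : δ * r ^ 2 * 1 ≤ δ * r ^ 2 * c₁ := by gcongr
    nlinarith
  have hsq3 : (a + δ * r + c) ^ 2 ≤ 3 * (a ^ 2 + (δ * r) ^ 2 + c ^ 2) := by
    nlinarith [sq_nonneg (a - δ * r), sq_nonneg (δ * r - c), sq_nonneg (a - c)]
  have hsq2 : (δ * r + c) ^ 2 ≤ 2 * ((δ * r) ^ 2 + c ^ 2) := by
    nlinarith [sq_nonneg (δ * r - c)]
  have hdescent : η / 2 * (δ * r + c) ^ 2 ≤ η / 2 * (2 * ((δ * r) ^ 2 + c ^ 2)) := by gcongr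
  have hdistance : δ * c₁ * (1 + K) * η ^ 2 * (a + δ * r + c) ^ 2
      ≤ η / 12 * (3 * (a ^ 2 + (δ * r) ^ 2 + c ^ 2)) := by gcongr
  linear_combination hdescent + hdistance + hdrift + 3 / 4 * mul_nonneg hη (sq_nonneg c)

theorem stmt_5_general {d : ℕ} (f h : EuclideanSpace ℝ (Fin d) → ℝ) (L δ : ℝ)
    (hL : 0 < L) (hδ : 0 < δ)
    (hfd : Differentiable ℝ f)
    (hsmooth : ∀ x y : EuclideanSpace ℝ (Fin d),
      ‖gradient f x - gradient f y‖ ≤ L * ‖x - y‖)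
    (hf : ContDiff ℝ 2 f) (hh : ContDiff ℝ 2 h)
    (hsim : ∀ x, ‖iteratedFDeriv ℝ 2 f x - iteratedFDeriv ℝ 2 h x‖ ≤ δ)
    (K : ℕ) (hK : 1 ≤ K) (k : ℕ)
    (η : ℝ) (hη0 : 0 < η) (hη : η ≤ min (1 / L) (1 / (192 * δ * K)))
    (x y m : EuclideanSpace ℝ (Fin d))
    (e : EuclideanSpace ℝ (Fin d)) (he : e = m - gradient f x + gradient h x)
    (yplus : EuclideanSpace ℝ (Fin d))
    (hyplus : yplus = y - η • (gradient h y + m)) :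
    f yplus + δ * (1 + 2 / K) ^ (K - k) * ‖yplus - x‖ ^ 2
      ≤ f y + δ * (1 + 2 / K) ^ (K - k + 1) * ‖y - x‖ ^ 2
        - (η / 4) * ‖gradient f y‖ ^ 2 + 2 * η * ‖e‖ ^ 2 := by
  have hK1 : (1 : ℝ) ≤ K := Nat.one_le_cast.mpr hK
  have hLη : η * L ≤ 1 := (le_div_iff₀ hL).mp (hη.trans (min_le_left _ _))
  have hηδK : η * (192 * δ * K) ≤ 1 :=
    (le_div_iff₀ (by positivity)).mp (hη.trans (min_le_right _ _))
  set c₁ := (1 + 2 / (K : ℝ)) ^ (K - k) with hc₁_def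
  have hc₁ : 1 ≤ c₁ := one_le_pow₀ (le_add_of_nonneg_right (by positivity))
  have hc₁8 : c₁ ≤ 8 :=
    (one_add_two_div_pow_le_exp_two (Nat.sub_le K k)).trans exp_two_lt_eight.le
  set g := gradient h y + m
  have hgG : ‖g - gradient f y‖ ≤ δ * ‖y - x‖ + ‖e‖ :=
    he ▸ norm_add_sub_gradient_le_of_hessian_similarity hf hh hsim x y m
  have hg : ‖g‖ ≤ ‖gradient f y‖ + δ * ‖y - x‖ + ‖e‖ := by
    linarith [norm_le_norm_add_norm_sub' g (gradient f y)]
  have hstep := hyplus ▸ image_sub_smul_le_of_gradient_lipschitz hfd hsmooth hη0.le hLη y g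
  have hdist : ‖yplus - x‖ ^ 2 ≤ (1 + 1 / K) * ‖y - x‖ ^ 2 + (1 + K) * (η * ‖g‖) ^ 2 := by
    simpa [hyplus, sub_right_comm y, sub_eq_add_neg (y - x), norm_smul, abs_of_pos hη0] using
      norm_add_sq_le_one_add_inv_mul_add (zero_lt_one.trans_le hK1) (y - x) (-(η • g))
  have hslack := error_terms_le_potential_slack (a := ‖gradient f y‖) (c := ‖e‖)
    (r := ‖y - x‖) hη0.le hδ.le hK1 hηδK hc₁ hc₁8
  have hgG2 : η / 2 * ‖g - gradient f y‖ ^ 2 ≤ η / 2 * (δ * ‖y - x‖ + ‖e‖) ^ 2 := by gcongr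
  have hg2 : δ * c₁ * (1 + K) * η ^ 2 * ‖g‖ ^ 2
      ≤ δ * c₁ * (1 + K) * η ^ 2 * (‖gradient f y‖ + δ * ‖y - x‖ + ‖e‖) ^ 2 := by gcongr
  have hdist' := mul_le_mul_of_nonneg_left hdist (by positivity : 0 ≤ δ * c₁)
  rw [pow_succ (1 + 2 / (K : ℝ)), ← hc₁_def]
  linear_combination hstep + hdist' + hgG2 + hg2 + hslack

/-- one-step potential decrease (noiseless case) for the
bias-corrected local update `y⁺ = y − η(∇h(y) + m)`. -/
theorem stmt_5 {d : ℕ} (f h : EuclideanSpace ℝ (Fin d) → ℝ) (L δ : ℝ)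
    (hL : 0 < L) (hδ : 0 < δ)
    (hfd : Differentiable ℝ f)
    (hsmooth : ∀ x y : EuclideanSpace ℝ (Fin d),
      ‖gradient f x - gradient f y‖ ≤ L * ‖x - y‖)
    (hf : ContDiff ℝ 2 f) (hh : ContDiff ℝ 2 h)
    (hsim : ∀ x, ‖iteratedFDeriv ℝ 2 f x - iteratedFDeriv ℝ 2 h x‖ ≤ δ)
    (K : ℕ) (hK : 1 ≤ K) (k : ℕ) (hk1 : 1 ≤ k) (hkK : k ≤ K)
    (η : ℝ) (hη0 : 0 < η) (hη : η ≤ min (1 / L) (1 / (192 * δ * K)))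
    (x y m : EuclideanSpace ℝ (Fin d))
    (e : EuclideanSpace ℝ (Fin d)) (he : e = m - gradient f x + gradient h x)
    (yplus : EuclideanSpace ℝ (Fin d))
    (hyplus : yplus = y - η • (gradient h y + m)) :
    f yplus + δ * (1 + 2 / K) ^ (K - k) * ‖yplus - x‖ ^ 2
      ≤ f y + δ * (1 + 2 / K) ^ (K - k + 1) * ‖y - x‖ ^ 2
        - (η / 4) * ‖gradient f y‖ ^ 2 + 2 * η * ‖e‖ ^ 2 :=
  stmt_5_general f h L δ hL hδ hfd hsmooth hf hh hsim K hK k η hη0 hη x y m e he yplus hyplus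
end

section
/- Let f, h : ℝ^d → ℝ be twice continuously differentiable and satisfy δ-Hessian similarity, let K ≥ 1 be an integer, and let 0 < η ≤ 1/(5δK) (no constraint on η when δ = 0). Given x, m ∈ ℝ^d, define y_0 = x and y_k = y_{k−1} − η(∇h(y_{k−1}) + m) for k = 1,…,K, and set e = m − ∇f(x) + ∇h(x). Then ‖y_K − x‖² ≤ 36K²η²‖e‖² + 18Kη² Σ_{k=0}^{K−1} ‖∇f(y_k)‖². -/
/-!
Writing `y_{k+1} - x = (y_k - x) - η (∇f(y_k) + e) + η ((∇f - ∇h)(y_k) - (∇f - ∇h)(x))`,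
δ-Hessian similarity makes `∇f - ∇h` δ-Lipschitz, so
`‖y_{k+1} - x‖ ≤ (1 + ηδ) ‖y_k - x‖ + η (‖e‖ + ‖∇f(y_k)‖)`. Unrolling this recursion gives
`‖y_K - x‖ ≤ (1 + ηδ)^K η ∑ₖ (‖e‖ + ‖∇f(y_k)‖)`, where `(1 + ηδ)^K ≤ exp (ηδK) < 3`, and
Cauchy–Schwarz bounds the square of the sum.
-/

open Finset

theorem norm_fderiv_sub_fderiv_le {E F : Type*} [NormedAddCommGroup E] [NormedSpace ℝ E]
    [NormedAddCommGroup F] [NormedSpace ℝ F] {φ : E → F} {δ : ℝ} (hφ : ContDiff ℝ 2 φ)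
    (hbound : ∀ z, ‖iteratedFDeriv ℝ 2 φ z‖ ≤ δ) (a b : E) :
    ‖fderiv ℝ φ b - fderiv ℝ φ a‖ ≤ δ * ‖b - a‖ := by
  have hdiff : Differentiable ℝ (fderiv ℝ φ) :=
    (hφ.fderiv_right le_rfl).differentiable one_ne_zero
  have hsecond : ∀ z, ‖fderiv ℝ (fderiv ℝ φ) z‖ ≤ δ := fun z => by
    rw [← norm_iteratedFDeriv_zero (𝕜 := ℝ) (f := fderiv ℝ (fderiv ℝ φ)) (x := z),
      norm_iteratedFDeriv_fderiv, norm_iteratedFDeriv_fderiv]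
    exact hbound z
  exact convex_univ.norm_image_sub_le_of_norm_fderiv_le (fun z _ => hdiff z)
    (fun z _ => hsecond z) (Set.mem_univ a) (Set.mem_univ b)

theorem norm_gradient_sub_gradient_sub_le {E : Type*} [NormedAddCommGroup E]
    [InnerProductSpace ℝ E] [CompleteSpace E] {f h : E → ℝ} {δ : ℝ}
    (hf : ContDiff ℝ 2 f) (hh : ContDiff ℝ 2 h)
    (hsim : ∀ z, ‖iteratedFDeriv ℝ 2 f z - iteratedFDeriv ℝ 2 h z‖ ≤ δ) (a b : E) :
    ‖(gradient f b - gradient h b) - (gradient f a - gradient h a)‖ ≤ δ * ‖b - a‖ := by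
  have hfderiv : ∀ z, fderiv ℝ (f - h) z = fderiv ℝ f z - fderiv ℝ h z := fun z =>
    fderiv_sub (hf.differentiable two_ne_zero z) (hh.differentiable two_ne_zero z)
  calc ‖(gradient f b - gradient h b) - (gradient f a - gradient h a)‖
      = ‖fderiv ℝ (f - h) b - fderiv ℝ (f - h) a‖ := by
        rw [← (InnerProductSpace.toDual ℝ E).norm_map]
        simp only [map_sub, toDual_gradient, hfderiv]
    _ ≤ δ * ‖b - a‖ := norm_fderiv_sub_fderiv_le (φ := f - h) (hf.sub hh)
        (fun z => by rw [iteratedFDeriv_sub hf hh]; exact hsim z) a b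

theorem norm_step_sub_le {E : Type*} [NormedAddCommGroup E] [NormedSpace ℝ E]
    {F H : E → E} {δ η : ℝ} (hη : 0 ≤ η) {x z : E}
    (hlip : ‖(F z - H z) - (F x - H x)‖ ≤ δ * ‖z - x‖) (m : E) :
    ‖z - η • (H z + m) - x‖ ≤ (1 + η * δ) * ‖z - x‖ + η * (‖m - F x + H x‖ + ‖F z‖) := by
  have hsplit : z - η • (H z + m) - x
      = (z - x) + η • ((F z - H z) - (F x - H x)) - η • (m - F x + H x) - η • F z := by
    module
  rw [hsplit]
  calc ‖(z - x) + η • ((F z - H z) - (F x - H x)) - η • (m - F x + H x) - η • F z‖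
      ≤ ‖z - x‖ + η * ‖(F z - H z) - (F x - H x)‖ + η * ‖m - F x + H x‖ + η * ‖F z‖ := by
        refine (norm_sub_le _ _).trans (add_le_add_left ((norm_sub_le _ _).trans
          (add_le_add_left (norm_add_le _ _) _)) _) |>.trans_eq ?_
        simp only [norm_smul, Real.norm_of_nonneg hη]
    _ ≤ ‖z - x‖ + η * (δ * ‖z - x‖) + η * ‖m - F x + H x‖ + η * ‖F z‖ := by gcongr
    _ = (1 + η * δ) * ‖z - x‖ + η * (‖m - F x + H x‖ + ‖F z‖) := by ring

theorem le_pow_mul_sum_of_le_mul_add {u a : ℕ → ℝ} {c : ℝ} {n : ℕ} (hc : 0 ≤ c)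
    (ha : ∀ k, 0 ≤ a k) (hu0 : u 0 = 0) (hu : ∀ k < n, u (k + 1) ≤ (1 + c) * u k + a k) :
    u n ≤ (1 + c) ^ n * ∑ k ∈ range n, a k := by
  induction n with
  | zero => simp [hu0]
  | succ n ih =>
    have ih := ih fun k hk => hu k (by omega)
    have hpow : 1 ≤ (1 + c) ^ (n + 1) := one_le_pow₀ (by linarith)
    calc u (n + 1) ≤ (1 + c) * u n + a n := hu n n.lt_succ_self
      _ ≤ (1 + c) * ((1 + c) ^ n * ∑ k ∈ range n, a k) + (1 + c) ^ (n + 1) * a n := by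
        gcongr ?_ + ?_
        · exact mul_le_mul_of_nonneg_left ih (by linarith)
        · exact le_mul_of_one_le_left (ha n) hpow
      _ = (1 + c) ^ (n + 1) * ∑ k ∈ range (n + 1), a k := by
        rw [sum_range_succ]; ring

theorem one_add_pow_le_three {t : ℝ} {n : ℕ} (ht : 0 ≤ t) (htn : t * n ≤ 1) :
    (1 + t) ^ n ≤ 3 :=
  calc (1 + t) ^ n ≤ Real.exp t ^ n := by
        gcongr; linarith [Real.add_one_le_exp t]
    _ = Real.exp (t * n) := by rw [← Real.exp_nat_mul, mul_comm]
    _ ≤ Real.exp 1 := Real.exp_le_exp.mpr htn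
    _ ≤ 3 := by linarith [Real.exp_one_lt_d9]

theorem sq_sum_const_add_le {ι : Type*} (s : Finset ι) (a : ℝ) (b : ι → ℝ) :
    (∑ i ∈ s, (a + b i)) ^ 2 ≤ 2 * #s ^ 2 * a ^ 2 + 2 * #s * ∑ i ∈ s, b i ^ 2 :=
  calc (∑ i ∈ s, (a + b i)) ^ 2 ≤ #s * ∑ i ∈ s, (a + b i) ^ 2 := sq_sum_le_card_mul_sum_sq
    _ ≤ #s * ∑ i ∈ s, 2 * (a ^ 2 + b i ^ 2) := by gcongr; exact add_sq_le
    _ = 2 * #s ^ 2 * a ^ 2 + 2 * #s * ∑ i ∈ s, b i ^ 2 := by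
      rw [← mul_sum, sum_add_distrib, sum_const, nsmul_eq_mul]; ring

/-- The step-size constraint `η ≤ 1/(5δK)` is encoded as `η * (5δK) ≤ 1`, which is vacuous when
`δ = 0`. -/
theorem stmt_7_general {d : ℕ} (f h : EuclideanSpace ℝ (Fin d) → ℝ) (δ : ℝ)
    (hf : ContDiff ℝ 2 f) (hh : ContDiff ℝ 2 h)
    (hsim : ∀ x, ‖iteratedFDeriv ℝ 2 f x - iteratedFDeriv ℝ 2 h x‖ ≤ δ)
    (K : ℕ)
    (η : ℝ) (hη0 : 0 < η) (hη : η * (5 * δ * K) ≤ 1)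
    (x m : EuclideanSpace ℝ (Fin d))
    (y : ℕ → EuclideanSpace ℝ (Fin d)) (hy0 : y 0 = x)
    (hyk : ∀ k, 1 ≤ k → k ≤ K →
      y k = y (k - 1) - η • (gradient h (y (k - 1)) + m))
    (e : EuclideanSpace ℝ (Fin d)) (he : e = m - gradient f x + gradient h x) :
    ‖y K - x‖ ^ 2
      ≤ 36 * K ^ 2 * η ^ 2 * ‖e‖ ^ 2
        + 18 * K * η ^ 2 * ∑ k ∈ Finset.range K, ‖gradient f (y k)‖ ^ 2 := by
  have hηδ : 0 ≤ η * δ := mul_nonneg hη0.le ((norm_nonneg _).trans (hsim x))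
  have hdrift : ‖y K - x‖ ≤ (1 + η * δ) ^ K * ∑ k ∈ range K, η * (‖e‖ + ‖gradient f (y k)‖) :=
    le_pow_mul_sum_of_le_mul_add (u := fun k => ‖y k - x‖) hηδ (fun k => by positivity)
      (by simp [hy0]) fun k hk => by
        rw [hyk (k + 1) (by omega) hk, Nat.add_sub_cancel, he]
        exact norm_step_sub_le hη0.le (norm_gradient_sub_gradient_sub_le hf hh hsim x (y k)) m
  have hgrowth : (1 + η * δ) ^ K ≤ 3 :=
    one_add_pow_le_three hηδ (by nlinarith [mul_nonneg hηδ K.cast_nonneg])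
  have hsum := sq_sum_const_add_le (range K) ‖e‖ fun k => ‖gradient f (y k)‖
  rw [card_range] at hsum
  rw [← mul_sum] at hdrift
  set S := ∑ k ∈ range K, (‖e‖ + ‖gradient f (y k)‖)
  have hS : 0 ≤ S := sum_nonneg fun k _ => by positivity
  have hnorm : ‖y K - x‖ ≤ 3 * (η * S) :=
    hdrift.trans (mul_le_mul_of_nonneg_right hgrowth (by positivity))
  calc ‖y K - x‖ ^ 2 ≤ 9 * η ^ 2 * S ^ 2 := by nlinarith [norm_nonneg (y K - x)]
    _ ≤ 9 * η ^ 2 * (2 * K ^ 2 * ‖e‖ ^ 2 + 2 * K * ∑ k ∈ range K, ‖gradient f (y k)‖ ^ 2) := by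
      gcongr
    _ ≤ _ := by nlinarith [sq_nonneg ((K : ℝ) * η * ‖e‖)]

/-- distance moved during a full cycle of `K` noiseless
bias-corrected local steps. The step-size constraint `η ≤ 1/(5δK)` is encoded
as `η * (5δK) ≤ 1`, which is vacuous when `δ = 0`. -/
theorem stmt_7 {d : ℕ} (f h : EuclideanSpace ℝ (Fin d) → ℝ) (δ : ℝ)
    (hf : ContDiff ℝ 2 f) (hh : ContDiff ℝ 2 h)
    (hsim : ∀ x, ‖iteratedFDeriv ℝ 2 f x - iteratedFDeriv ℝ 2 h x‖ ≤ δ)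
    (K : ℕ) (hK : 1 ≤ K)
    (η : ℝ) (hη0 : 0 < η) (hη : η * (5 * δ * K) ≤ 1)
    (x m : EuclideanSpace ℝ (Fin d))
    (y : ℕ → EuclideanSpace ℝ (Fin d)) (hy0 : y 0 = x)
    (hyk : ∀ k, 1 ≤ k → k ≤ K →
      y k = y (k - 1) - η • (gradient h (y (k - 1)) + m))
    (e : EuclideanSpace ℝ (Fin d)) (he : e = m - gradient f x + gradient h x) :
    ‖y K - x‖ ^ 2
      ≤ 36 * K ^ 2 * η ^ 2 * ‖e‖ ^ 2
        + 18 * K * η ^ 2 * ∑ k ∈ Finset.range K, ‖gradient f (y k)‖ ^ 2 :=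
  stmt_7_general f h δ hf hh hsim K η hη0 hη x m y hy0 hyk e he
end

section
/- Let (Ω, μ) be a probability space, D : ℝ^d → ℝ^d, δ ≥ 0, σ ≥ 0, and let g : ℝ^d × Ω → ℝ^d satisfy: (i) for μ-almost every ω the map x ↦ g(x, ω) is δ-Lipschitz, (ii) ∫ g(x, ω) dμ(ω) = D(x) for every x, and (iii) ∫ ‖g(x, ω) − D(x)‖² dμ(ω) ≤ σ² for every x. Let a ∈ [0,1] and e, u, v ∈ ℝ^d, and define e⁺(ω) = (1−a)e + a(g(v,ω) − D(v)) + (1−a)(g(v,ω) − D(v) − g(u,ω) + D(u)). Then ∫ ‖e⁺(ω)‖² dμ(ω) ≤ (1−a)²‖e‖² + 2a²σ² + 2δ²‖v − u‖². -/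
/-!
Write `e⁺ = (1 - a) e + P + Q` with `P = a (g(v) - D(v))` and `Q = (1 - a) (X - 𝔼 X)`, where
`X = g(v) - g(u)`. Both `P` and `Q` are centred, so the cross term with the deterministic
`(1 - a) e` vanishes and `𝔼‖e⁺‖² = (1 - a)²‖e‖² + 𝔼‖P + Q‖² ≤ (1 - a)²‖e‖² + 2𝔼‖P‖² + 2𝔼‖Q‖²`.
Here `𝔼‖P‖² ≤ a²σ²`, and `Q` is `(1 - a)` times the centring of `X`, whose second moment is at most
`𝔼‖X‖² ≤ δ²‖v - u‖²` by the Lipschitz bound. If `e⁺` is not square integrable, the Bochner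
integral is `0` and the bound is trivial.
-/

open MeasureTheory

section Normed

variable {E : Type*} [NormedAddCommGroup E] {Ω : Type*} [MeasurableSpace Ω] {μ : Measure Ω}

lemma integral_norm_add_sq_le {P Q : Ω → E} (hP : MemLp P 2 μ) (hQ : MemLp Q 2 μ) :
    ∫ ω, ‖P ω + Q ω‖ ^ 2 ∂μ ≤ 2 * ∫ ω, ‖P ω‖ ^ 2 ∂μ + 2 * ∫ ω, ‖Q ω‖ ^ 2 ∂μ := by
  have hP2 := ((memLp_two_iff_integrable_sq_norm hP.1).1 hP).const_mul 2
  have hQ2 := ((memLp_two_iff_integrable_sq_norm hQ.1).1 hQ).const_mul 2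
  rw [← integral_const_mul, ← integral_const_mul, ← integral_add hP2 hQ2]
  refine integral_mono_of_nonneg (.of_forall fun _ ↦ by positivity) (hP2.add hQ2)
    (.of_forall fun ω ↦ ?_)
  calc ‖P ω + Q ω‖ ^ 2 ≤ (‖P ω‖ + ‖Q ω‖) ^ 2 :=
        pow_le_pow_left₀ (norm_nonneg _) (norm_add_le _ _) 2
    _ ≤ 2 * ‖P ω‖ ^ 2 + 2 * ‖Q ω‖ ^ 2 := by nlinarith [sq_nonneg (‖P ω‖ - ‖Q ω‖)]

lemma integral_norm_sq_le_of_ae_norm_le [IsProbabilityMeasure μ] {X : Ω → E} {C : ℝ}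
    (hX : ∀ᵐ ω ∂μ, ‖X ω‖ ≤ C) :
    ∫ ω, ‖X ω‖ ^ 2 ∂μ ≤ C ^ 2 := by
  calc ∫ ω, ‖X ω‖ ^ 2 ∂μ ≤ ∫ _ω, C ^ 2 ∂μ :=
        integral_mono_of_nonneg (.of_forall fun _ ↦ by positivity) (integrable_const _)
          (hX.mono fun _ h ↦ pow_le_pow_left₀ (norm_nonneg _) h 2)
    _ = C ^ 2 := by simp

lemma integral_sub_integral_eq_zero [NormedSpace ℝ E] [CompleteSpace E] [IsProbabilityMeasure μ]
    {X : Ω → E} (hX : Integrable X μ) :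
    ∫ ω, (X ω - ∫ ω', X ω' ∂μ) ∂μ = 0 := by
  rw [integral_sub hX (integrable_const _), integral_const, probReal_univ, one_smul, sub_self]

end Normed

section InnerProduct

variable {E : Type*} [NormedAddCommGroup E] [InnerProductSpace ℝ E] [CompleteSpace E]
  {Ω : Type*} [MeasurableSpace Ω] {μ : Measure Ω} [IsProbabilityMeasure μ]

lemma integral_norm_const_add_sq (c : E) {Y : Ω → E} (hY : MemLp Y 2 μ)
    (hY0 : ∫ ω, Y ω ∂μ = 0) :
    ∫ ω, ‖c + Y ω‖ ^ 2 ∂μ = ‖c‖ ^ 2 + ∫ ω, ‖Y ω‖ ^ 2 ∂μ := by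
  have hY1 : Integrable Y μ := hY.integrable one_le_two
  have hY2 : Integrable (fun ω ↦ ‖Y ω‖ ^ 2) μ :=
    (memLp_two_iff_integrable_sq_norm hY.1).1 hY
  have hcross : Integrable (fun ω ↦ 2 * inner ℝ c (Y ω)) μ := (hY1.const_inner c).const_mul 2
  have hconst_cross : Integrable (fun ω ↦ ‖c‖ ^ 2 + 2 * inner ℝ c (Y ω)) μ :=
    (integrable_const _).add hcross
  simp_rw [norm_add_sq_real]
  rw [integral_add hconst_cross hY2, integral_add (integrable_const _) hcross,
    integral_const_mul, integral_inner hY1, hY0]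
  simp

lemma integral_norm_sub_integral_sq_le {X : Ω → E} (hX : MemLp X 2 μ) :
    ∫ ω, ‖X ω - ∫ ω', X ω' ∂μ‖ ^ 2 ∂μ ≤ ∫ ω, ‖X ω‖ ^ 2 ∂μ := by
  have h := integral_norm_const_add_sq (∫ ω', X ω' ∂μ) (Y := fun ω ↦ X ω - ∫ ω', X ω' ∂μ)
    (hX.sub (memLp_const _))
    (integral_sub_integral_eq_zero (hX.integrable one_le_two))
  simp only [add_sub_cancel] at h
  rw [h]
  exact le_add_of_nonneg_left (sq_nonneg _)

lemma integral_norm_sub_integral_sq_le_of_ae_norm_le {X : Ω → E}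
    (hX : AEStronglyMeasurable X μ) {C : ℝ} (hC : ∀ᵐ ω ∂μ, ‖X ω‖ ≤ C) :
    ∫ ω, ‖X ω - ∫ ω', X ω' ∂μ‖ ^ 2 ∂μ ≤ C ^ 2 :=
  (integral_norm_sub_integral_sq_le (MemLp.of_bound hX C hC)).trans
    (integral_norm_sq_le_of_ae_norm_le hC)

lemma integral_norm_const_add_add_sq_le (c : E) {P Q : Ω → E} (hP : Integrable P μ)
    (hP0 : ∫ ω, P ω ∂μ = 0) (hQ : MemLp Q 2 μ) (hQ0 : ∫ ω, Q ω ∂μ = 0) :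
    ∫ ω, ‖c + (P ω + Q ω)‖ ^ 2 ∂μ
      ≤ ‖c‖ ^ 2 + 2 * ∫ ω, ‖P ω‖ ^ 2 ∂μ + 2 * ∫ ω, ‖Q ω‖ ^ 2 ∂μ := by
  have hQ1 : Integrable Q μ := hQ.integrable one_le_two
  by_cases hL2 : MemLp (fun ω ↦ c + (P ω + Q ω)) 2 μ
  · have hPQ : MemLp (fun ω ↦ P ω + Q ω) 2 μ := by
      have h : (fun ω ↦ P ω + Q ω) = (fun ω ↦ c + (P ω + Q ω)) - fun _ ↦ c := by
        funext ω; simp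
      exact h ▸ hL2.sub (memLp_const c)
    have hP2 : MemLp P 2 μ := by
      have h : P = (fun ω ↦ P ω + Q ω) - Q := by
        funext ω; simp
      exact h ▸ hPQ.sub hQ
    rw [integral_norm_const_add_sq c hPQ (by rw [integral_add hP hQ1, hP0, hQ0, add_zero]),
      add_assoc]
    gcongr
    exact integral_norm_add_sq_le hP2 hQ
  · have h_aesm : AEStronglyMeasurable (fun ω ↦ c + (P ω + Q ω)) μ :=
      aestronglyMeasurable_const.add (hP.add hQ1).1
    rw [integral_undef (mt (memLp_two_iff_integrable_sq_norm h_aesm).2 hL2)]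
    positivity

end InnerProduct

theorem stmt_10_general {d : ℕ} {Ω : Type*} [MeasurableSpace Ω]
    (μ : Measure Ω) [IsProbabilityMeasure μ]
    (D : EuclideanSpace ℝ (Fin d) → EuclideanSpace ℝ (Fin d))
    (δ σ : ℝ)
    (g : EuclideanSpace ℝ (Fin d) → Ω → EuclideanSpace ℝ (Fin d))
    (hint : ∀ x, Integrable (g x) μ)
    (hlip : ∀ᵐ ω ∂μ, ∀ x y : EuclideanSpace ℝ (Fin d),
      ‖g x ω - g y ω‖ ≤ δ * ‖x - y‖)
    (hunbiased : ∀ x, ∫ ω, g x ω ∂μ = D x)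
    (hvar : ∀ x, ∫ ω, ‖g x ω - D x‖ ^ 2 ∂μ ≤ σ ^ 2)
    (a : ℝ) (ha0 : 0 ≤ a) (ha1 : a ≤ 1)
    (e u v : EuclideanSpace ℝ (Fin d))
    (eplus : Ω → EuclideanSpace ℝ (Fin d))
    (heplus : ∀ ω, eplus ω = (1 - a) • e + a • (g v ω - D v)
      + (1 - a) • (g v ω - D v - g u ω + D u)) :
    ∫ ω, ‖eplus ω‖ ^ 2 ∂μ
      ≤ (1 - a) ^ 2 * ‖e‖ ^ 2 + 2 * a ^ 2 * σ ^ 2 + 2 * δ ^ 2 * ‖v - u‖ ^ 2 := by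
  have hX : Integrable (fun ω ↦ g v ω - g u ω) μ := (hint v).sub (hint u)
  have hX_mean : ∫ ω, (g v ω - g u ω) ∂μ = D v - D u := by
    rw [integral_sub (hint v) (hint u), hunbiased, hunbiased]
  have hX_bound : ∀ᵐ ω ∂μ, ‖g v ω - g u ω‖ ≤ δ * ‖v - u‖ := hlip.mono fun ω h ↦ h v u
  have hX_centred : MemLp (fun ω ↦ g v ω - g u ω - (D v - D u)) 2 μ :=
    (MemLp.of_bound hX.1 _ hX_bound).sub (memLp_const _)
  have hX_centred_sq : ∫ ω, ‖g v ω - g u ω - (D v - D u)‖ ^ 2 ∂μ ≤ (δ * ‖v - u‖) ^ 2 := by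
    simpa only [hX_mean] using integral_norm_sub_integral_sq_le_of_ae_norm_le hX.1 hX_bound
  have hdecomp : ∀ ω, eplus ω = (1 - a) • e
      + (a • (g v ω - D v) + (1 - a) • (g v ω - g u ω - (D v - D u))) := by
    intro ω; rw [heplus]; module
  have h1a : (1 - a) ^ 2 ≤ 1 := by nlinarith
  calc ∫ ω, ‖eplus ω‖ ^ 2 ∂μ
      ≤ ‖(1 - a) • e‖ ^ 2 + 2 * ∫ ω, ‖a • (g v ω - D v)‖ ^ 2 ∂μ
        + 2 * ∫ ω, ‖(1 - a) • (g v ω - g u ω - (D v - D u))‖ ^ 2 ∂μ := by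
        simp only [hdecomp]
        refine integral_norm_const_add_add_sq_le _ (((hint v).sub (integrable_const _)).smul a)
          ?_ (hX_centred.const_smul (1 - a)) ?_
        · rw [integral_smul, ← hunbiased, integral_sub_integral_eq_zero (hint v), smul_zero]
        · rw [integral_smul, ← hX_mean, integral_sub_integral_eq_zero hX, smul_zero]
    _ = (1 - a) ^ 2 * ‖e‖ ^ 2 + 2 * a ^ 2 * ∫ ω, ‖g v ω - D v‖ ^ 2 ∂μ
        + 2 * (1 - a) ^ 2 * ∫ ω, ‖g v ω - g u ω - (D v - D u)‖ ^ 2 ∂μ := by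
        simp only [norm_smul, mul_pow, Real.norm_eq_abs, sq_abs, integral_const_mul]; ring
    _ ≤ (1 - a) ^ 2 * ‖e‖ ^ 2 + 2 * a ^ 2 * σ ^ 2 + 2 * 1 * (δ * ‖v - u‖) ^ 2 := by
        gcongr; exact hvar v
    _ = _ := by ring

/-- one-round bound for the momentum error of the MVR
(momentum-based variance reduction) update, where `g(·, ω)` is an almost surely
δ-Lipschitz unbiased estimator of `D` with variance at most `σ²`. -/
theorem stmt_10 {d : ℕ} {Ω : Type*} [MeasurableSpace Ω]
    (μ : Measure Ω) [IsProbabilityMeasure μ]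
    (D : EuclideanSpace ℝ (Fin d) → EuclideanSpace ℝ (Fin d))
    (δ σ : ℝ) (hδ : 0 ≤ δ) (hσ : 0 ≤ σ)
    (g : EuclideanSpace ℝ (Fin d) → Ω → EuclideanSpace ℝ (Fin d))
    (hint : ∀ x, Integrable (g x) μ)
    (hlip : ∀ᵐ ω ∂μ, ∀ x y : EuclideanSpace ℝ (Fin d),
      ‖g x ω - g y ω‖ ≤ δ * ‖x - y‖)
    (hunbiased : ∀ x, ∫ ω, g x ω ∂μ = D x)
    (hvar : ∀ x, ∫ ω, ‖g x ω - D x‖ ^ 2 ∂μ ≤ σ ^ 2)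
    (a : ℝ) (ha0 : 0 ≤ a) (ha1 : a ≤ 1)
    (e u v : EuclideanSpace ℝ (Fin d))
    (eplus : Ω → EuclideanSpace ℝ (Fin d))
    (heplus : ∀ ω, eplus ω = (1 - a) • e + a • (g v ω - D v)
      + (1 - a) • (g v ω - D v - g u ω + D u)) :
    ∫ ω, ‖eplus ω‖ ^ 2 ∂μ
      ≤ (1 - a) ^ 2 * ‖e‖ ^ 2 + 2 * a ^ 2 * σ ^ 2 + 2 * δ ^ 2 * ‖v - u‖ ^ 2 :=
  stmt_10_general μ D δ σ g hint hlip hunbiased hvar a ha0 ha1 e u v eplus heplus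
end

section
/- Let f : ℝ^d → ℝ be L-smooth and bounded below by f*, and let f, h be twice continuously differentiable and satisfy δ-Hessian similarity (δ ≥ 0). Fix integers K ≥ 1 and T ≥ 1, and set η = min(1/L, 1/(192δK)) (η = 1/L when δ = 0). Given x⁰ ∈ ℝ^d, define for t = 1,…,T: y^t_0 = x^{t−1}; y^t_k = y^t_{k−1} − η(∇h(y^t_{k−1}) − ∇h(x^{t−1}) + ∇f(x^{t−1})) for k = 1,…,K; and x^t = y^t_K. Then (1/(KT)) Σ_{t=1}^T Σ_{k=0}^{K−1} ‖∇f(y^t_k)‖² ≤ 4(L + 192δK)(f(x⁰) − f*)/(KT). -/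
/-
Each round is gradient descent on `f` with a biased gradient: by Hessian similarity, the corrected
gradient at `y_k` differs from `∇f(y_k)` by at most `δ ‖y_k - y_0‖`. Since `η L ≤ 1`, the descent
lemma gives `f(y_{k+1}) ≤ f(y_k) - (η/2) ‖∇f(y_k)‖² + (η/2) δ² ‖y_k - y_0‖²`. A discrete Grönwall
argument with `(1 + ηδ)^K ≤ e < 3` bounds the drift by `‖y_k - y_0‖ ≤ 3η ∑_{j<k} ‖∇f(y_j)‖`, and by
Cauchy–Schwarz and `ηδK ≤ 1/192` the accumulated bias costs at most half of the descent. Hence each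
round decreases `f` by at least `(η/4) ∑_k ‖∇f(y_k)‖²`; telescoping over the rounds and
`1/η = max(L, 192δK) ≤ L + 192δK` give the bound.
-/


open Finset
open scoped RealInnerProductSpace

section Gradient

variable {E : Type*} [NormedAddCommGroup E] [InnerProductSpace ℝ E] [CompleteSpace E]

lemma le_add_inner_gradient_add_of_norm_gradient_sub_le {f : E → ℝ} {L : ℝ}
    (hf : Differentiable ℝ f) (hsmooth : ∀ x y, ‖gradient f x - gradient f y‖ ≤ L * ‖x - y‖)
    (a b : E) : f b ≤ f a + ⟪gradient f a, b - a⟫ + L / 2 * ‖b - a‖ ^ 2 := by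
  set v := b - a
  -- The claim is `ψ 1 ≤ ψ 0`, and `ψ` is antitone on `[0, 1]` by the Lipschitz bound on `∇f`.
  set ψ : ℝ → ℝ := fun s => f (a + s • v) - s * ⟪gradient f a, v⟫ - L / 2 * s ^ 2 * ‖v‖ ^ 2
  have hψ' : ∀ s, HasDerivAt ψ
      (⟪gradient f (a + s • v) - gradient f a, v⟫ - L * s * ‖v‖ ^ 2) s := by
    intro s
    have hline : HasDerivAt (fun s : ℝ => a + s • v) v s := by
      simpa using ((hasDerivAt_id s).smul_const v).const_add a
    refine ((((hf _).hasFDerivAt.comp_hasDerivAt s hline).sub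
      ((hasDerivAt_id s).mul_const ⟪gradient f a, v⟫)).sub
      (((hasDerivAt_pow 2 s).const_mul (L / 2)).mul_const (‖v‖ ^ 2))).congr_deriv ?_
    simp only [inner_sub_left, inner_gradient_left]
    push_cast
    ring
  have hanti : AntitoneOn ψ (Set.Icc 0 1) := by
    refine antitoneOn_of_deriv_nonpos (convex_Icc 0 1)
      (fun s _ => (hψ' s).continuousAt.continuousWithinAt)
      (fun s _ => (hψ' s).differentiableAt.differentiableWithinAt) fun s hs => ?_
    rw [interior_Icc] at hs
    rw [(hψ' s).deriv, sub_nonpos]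
    calc ⟪gradient f (a + s • v) - gradient f a, v⟫
        ≤ ‖gradient f (a + s • v) - gradient f a‖ * ‖v‖ := real_inner_le_norm _ _
      _ ≤ L * ‖s • v‖ * ‖v‖ := by
          gcongr
          simpa using hsmooth (a + s • v) a
      _ = L * s * ‖v‖ ^ 2 := by
          rw [norm_smul, Real.norm_of_nonneg hs.1.le]
          ring
  have h01 := hanti (by simp) (by simp) zero_le_one
  simp only [ψ, zero_smul, add_zero, one_smul, zero_mul, sub_zero, one_mul, one_pow,
    mul_one, ne_eq, OfNat.ofNat_ne_zero, not_false_eq_true, zero_pow, mul_zero] at h01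
  rw [add_sub_cancel] at h01
  linarith

lemma le_sub_of_inexact_gradient_step {f : E → ℝ} {L η : ℝ}
    (hf : Differentiable ℝ f) (hsmooth : ∀ x y, ‖gradient f x - gradient f y‖ ≤ L * ‖x - y‖)
    (hη : 0 ≤ η) (hηL : η * L ≤ 1) (x g : E) :
    f (x - η • g) ≤ f x - η / 2 * ‖gradient f x‖ ^ 2 + η / 2 * ‖g - gradient f x‖ ^ 2 := by
  have hdescent := le_add_inner_gradient_add_of_norm_gradient_sub_le hf hsmooth x (x - η • g)
  rw [sub_sub_cancel_left, inner_neg_right, real_inner_smul_right, norm_neg, norm_smul,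
    Real.norm_of_nonneg hη] at hdescent
  have hsq : L / 2 * (η * ‖g‖) ^ 2 ≤ η / 2 * ‖g‖ ^ 2 := by
    have := mul_le_mul_of_nonneg_right hηL (mul_nonneg hη (sq_nonneg ‖g‖))
    nlinarith
  have hexpand := norm_sub_sq_real g (gradient f x)
  rw [real_inner_comm] at hexpand
  nlinarith

lemma norm_gradient_sub_le_of_norm_iteratedFDeriv_two_le {φ : E → ℝ} {δ : ℝ}
    (hφ : ContDiff ℝ 2 φ) (hφ2 : ∀ x, ‖iteratedFDeriv ℝ 2 φ x‖ ≤ δ) (a b : E) :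
    ‖gradient φ a - gradient φ b‖ ≤ δ * ‖a - b‖ := by
  have hD : ∀ x, ‖fderiv ℝ (fderiv ℝ φ) x‖ ≤ δ := fun x => by
    rw [← norm_iteratedFDeriv_one, norm_iteratedFDeriv_fderiv]
    exact hφ2 x
  have hdiff : Differentiable ℝ (fderiv ℝ φ) :=
    (hφ.fderiv_right (m := 1) le_rfl).differentiable one_ne_zero
  have := Convex.norm_image_sub_le_of_norm_fderiv_le (fun x _ => hdiff x) (fun x _ => hD x)
    convex_univ (Set.mem_univ b) (Set.mem_univ a)
  rwa [gradient, gradient, ← map_sub, LinearIsometryEquiv.norm_map]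

lemma norm_gradient_sub_sub_le_of_norm_iteratedFDeriv_two_sub_le {f h : E → ℝ} {δ : ℝ}
    (hf : ContDiff ℝ 2 f) (hh : ContDiff ℝ 2 h)
    (hsim : ∀ x, ‖iteratedFDeriv ℝ 2 f x - iteratedFDeriv ℝ 2 h x‖ ≤ δ) (a b : E) :
    ‖(gradient h a - gradient h b) - (gradient f a - gradient f b)‖ ≤ δ * ‖a - b‖ := by
  have hgrad : ∀ x, gradient (h - f) x = gradient h x - gradient f x := fun x => by
    rw [gradient, fderiv_sub ((hh.differentiable two_ne_zero) x)
      ((hf.differentiable two_ne_zero) x), map_sub, ← gradient, ← gradient]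
  have := norm_gradient_sub_le_of_norm_iteratedFDeriv_two_le (φ := h - f) (hh.sub hf) (fun x => by
    rw [iteratedFDeriv_sub_apply hh.contDiffAt hf.contDiffAt, norm_sub_rev]
    exact hsim x) a b
  rwa [hgrad, hgrad, sub_sub_sub_comm] at this

end Gradient

lemma le_pow_mul_sum_of_le_mul_add_s13 {r b : ℕ → ℝ} {a : ℝ} {K : ℕ} (ha : 1 ≤ a)
    (hb : ∀ k, 0 ≤ b k) (hr0 : r 0 ≤ 0) (hr : ∀ k < K, r (k + 1) ≤ a * r k + b k) :
    ∀ k ≤ K, r k ≤ a ^ k * ∑ j ∈ range k, b j := by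
  intro k hk
  induction k with
  | zero => simpa using hr0
  | succ n ih =>
    calc r (n + 1) ≤ a * r n + b n := hr n hk
      _ ≤ a * (a ^ n * ∑ j ∈ range n, b j) + a ^ (n + 1) * b n := by
          gcongr
          · exact ih (by omega)
          · exact le_mul_of_one_le_left (hb n) (one_le_pow₀ ha)
      _ = a ^ (n + 1) * ∑ j ∈ range (n + 1), b j := by rw [sum_range_succ]; ring

lemma one_add_pow_le_three_s13 {x : ℝ} {K : ℕ} (hx : -1 ≤ x) (hKx : K * x ≤ 1) :
    (1 + x) ^ K ≤ 3 :=
  calc (1 + x) ^ K ≤ Real.exp x ^ K :=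
        pow_le_pow_left₀ (by linarith) (by linarith [Real.add_one_le_exp x]) K
    _ = Real.exp (K * x) := (Real.exp_nat_mul x K).symm
    _ ≤ Real.exp 1 := Real.exp_le_exp.2 hKx
    _ ≤ 3 := Real.exp_one_lt_three.le

section Drift

variable {E : Type*} [NormedAddCommGroup E] [NormedSpace ℝ E]
  {z g G : ℕ → E} {η δ : ℝ} {K : ℕ}

lemma norm_sub_le_of_biased_steps (hη : 0 ≤ η) (hδ : 0 ≤ δ) (hηδK : K * (η * δ) ≤ 1)
    (hz : ∀ k < K, z (k + 1) = z k - η • g k)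
    (hg : ∀ k < K, ‖g k - G k‖ ≤ δ * ‖z k - z 0‖) :
    ∀ k ≤ K, ‖z k - z 0‖ ≤ 3 * η * ∑ j ∈ range k, ‖G j‖ := by
  have hstep : ∀ k < K, ‖z (k + 1) - z 0‖ ≤ (1 + η * δ) * ‖z k - z 0‖ + η * ‖G k‖ := by
    intro k hk
    have hgk : ‖g k‖ ≤ ‖G k‖ + δ * ‖z k - z 0‖ :=
      calc ‖g k‖ = ‖G k + (g k - G k)‖ := by rw [add_sub_cancel]
        _ ≤ ‖G k‖ + ‖g k - G k‖ := norm_add_le _ _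
        _ ≤ ‖G k‖ + δ * ‖z k - z 0‖ := by gcongr; exact hg k hk
    calc ‖z (k + 1) - z 0‖ = ‖(z k - z 0) - η • g k‖ := by rw [hz k hk, sub_right_comm]
      _ ≤ ‖z k - z 0‖ + η * ‖g k‖ := by
          simpa [norm_smul, Real.norm_of_nonneg hη] using norm_sub_le (z k - z 0) (η • g k)
      _ ≤ ‖z k - z 0‖ + η * (‖G k‖ + δ * ‖z k - z 0‖) := by gcongr
      _ = (1 + η * δ) * ‖z k - z 0‖ + η * ‖G k‖ := by ring
  intro k hk
  have hηδ : 0 ≤ η * δ := mul_nonneg hη hδ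
  have hpow : (1 + η * δ) ^ k ≤ 3 := one_add_pow_le_three_s13 (by linarith) <|
    le_trans (by gcongr) hηδK
  calc ‖z k - z 0‖ ≤ (1 + η * δ) ^ k * ∑ j ∈ range k, η * ‖G j‖ :=
        le_pow_mul_sum_of_le_mul_add_s13 (r := fun k => ‖z k - z 0‖) (by linarith) (fun j => by positivity) (by simp) hstep k hk
    _ ≤ 3 * ∑ j ∈ range k, η * ‖G j‖ := by gcongr
    _ = 3 * η * ∑ j ∈ range k, ‖G j‖ := by rw [← mul_sum]; ring

lemma sum_norm_sub_sq_le_of_biased_steps (hη : 0 ≤ η) (hδ : 0 ≤ δ) (hηδK : K * (η * δ) ≤ 1)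
    (hz : ∀ k < K, z (k + 1) = z k - η • g k)
    (hg : ∀ k < K, ‖g k - G k‖ ≤ δ * ‖z k - z 0‖) :
    ∑ k ∈ range K, ‖z k - z 0‖ ^ 2 ≤ 9 * η ^ 2 * K ^ 2 * ∑ k ∈ range K, ‖G k‖ ^ 2 := by
  set S := ∑ k ∈ range K, ‖G k‖ ^ 2
  have hk : ∀ k ∈ range K, ‖z k - z 0‖ ^ 2 ≤ 9 * η ^ 2 * K * S := by
    intro k hk
    have hkK : k ≤ K := (mem_range.1 hk).le
    have hcs : (∑ j ∈ range k, ‖G j‖) ^ 2 ≤ k * ∑ j ∈ range k, ‖G j‖ ^ 2 := by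
      simpa using sq_sum_le_card_mul_sum_sq (s := range k) (f := fun j => ‖G j‖)
    have hsub : ∑ j ∈ range k, ‖G j‖ ^ 2 ≤ S :=
      sum_le_sum_of_subset_of_nonneg (range_subset_range.2 hkK) fun j _ _ => by positivity
    calc ‖z k - z 0‖ ^ 2 ≤ (3 * η * ∑ j ∈ range k, ‖G j‖) ^ 2 := by
          gcongr; exact norm_sub_le_of_biased_steps hη hδ hηδK hz hg k hkK
      _ = 9 * η ^ 2 * (∑ j ∈ range k, ‖G j‖) ^ 2 := by ring
      _ ≤ 9 * η ^ 2 * (K * S) := by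
          gcongr
          exact hcs.trans (mul_le_mul (by exact_mod_cast hkK) hsub
            (sum_nonneg fun j _ => by positivity) (by positivity))
      _ = 9 * η ^ 2 * K * S := by ring
  calc ∑ k ∈ range K, ‖z k - z 0‖ ^ 2 ≤ ∑ _k ∈ range K, 9 * η ^ 2 * K * S := sum_le_sum hk
    _ = 9 * η ^ 2 * K ^ 2 * S := by rw [sum_const, card_range, nsmul_eq_mul]; ring

end Drift

section LocalRound

variable {E : Type*} [NormedAddCommGroup E] [InnerProductSpace ℝ E] [CompleteSpace E]
  {f : E → ℝ} {z g : ℕ → E} {L η δ : ℝ} {K : ℕ}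

lemma sum_norm_gradient_sq_le_of_biased_steps (hf : Differentiable ℝ f)
    (hsmooth : ∀ x y, ‖gradient f x - gradient f y‖ ≤ L * ‖x - y‖)
    (hη : 0 < η) (hδ : 0 ≤ δ) (hηL : η * L ≤ 1) (hηδK : K * (η * δ) ≤ 1 / 192)
    (hz : ∀ k < K, z (k + 1) = z k - η • g k)
    (hg : ∀ k < K, ‖g k - gradient f (z k)‖ ≤ δ * ‖z k - z 0‖) :
    ∑ k ∈ range K, ‖gradient f (z k)‖ ^ 2 ≤ 4 / η * (f (z 0) - f (z K)) := by
  set S := ∑ k ∈ range K, ‖gradient f (z k)‖ ^ 2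
  have hdescent : ∀ k ∈ range K, f (z (k + 1)) - f (z k)
      ≤ -(η / 2) * ‖gradient f (z k)‖ ^ 2 + η / 2 * δ ^ 2 * ‖z k - z 0‖ ^ 2 := by
    intro k hk
    have hk := mem_range.1 hk
    have hstep := le_sub_of_inexact_gradient_step hf hsmooth hη.le hηL (z k) (g k)
    rw [← hz k hk] at hstep
    have hbias : ‖g k - gradient f (z k)‖ ^ 2 ≤ δ ^ 2 * ‖z k - z 0‖ ^ 2 := by
      rw [← mul_pow]; gcongr; exact hg k hk
    nlinarith
  have hdrift := sum_norm_sub_sq_le_of_biased_steps hη.le hδ (hηδK.trans (by norm_num)) hz hg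
  have hsmall : δ ^ 2 * (9 * η ^ 2 * K ^ 2 * S) ≤ S / 2 := by
    have hS : 0 ≤ S := sum_nonneg fun k _ => by positivity
    have h0 : 0 ≤ K * (η * δ) := by positivity
    have : δ ^ 2 * (9 * η ^ 2 * K ^ 2) ≤ 1 / 2 := by nlinarith
    nlinarith
  have hdecrease : f (z K) - f (z 0) ≤ -(η / 4) * S :=
    calc f (z K) - f (z 0) = ∑ k ∈ range K, (f (z (k + 1)) - f (z k)) :=
          (sum_range_sub (fun k => f (z k)) K).symm
      _ ≤ ∑ k ∈ range K, (-(η / 2) * ‖gradient f (z k)‖ ^ 2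
            + η / 2 * δ ^ 2 * ‖z k - z 0‖ ^ 2) := sum_le_sum hdescent
      _ = -(η / 2) * S + η / 2 * (δ ^ 2 * ∑ k ∈ range K, ‖z k - z 0‖ ^ 2) := by
          rw [sum_add_distrib, ← mul_sum, ← mul_sum]; ring
      _ ≤ -(η / 2) * S + η / 2 * (S / 2) := by gcongr; exact (by gcongr : _ ≤ _).trans hsmall
      _ = -(η / 4) * S := by ring
  rw [div_mul_eq_mul_div, le_div_iff₀ hη]
  linarith

lemma sum_norm_gradient_sq_le_of_bias_corrected_steps {h : E → ℝ} (hf : Differentiable ℝ f)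
    (hsmooth : ∀ x y, ‖gradient f x - gradient f y‖ ≤ L * ‖x - y‖)
    (hf2 : ContDiff ℝ 2 f) (hh2 : ContDiff ℝ 2 h)
    (hsim : ∀ x, ‖iteratedFDeriv ℝ 2 f x - iteratedFDeriv ℝ 2 h x‖ ≤ δ)
    (hη : 0 < η) (hδ : 0 ≤ δ) (hηL : η * L ≤ 1) (hηδK : K * (η * δ) ≤ 1 / 192)
    (hz : ∀ k < K, z (k + 1)
      = z k - η • (gradient h (z k) - gradient h (z 0) + gradient f (z 0))) :
    ∑ k ∈ range K, ‖gradient f (z k)‖ ^ 2 ≤ 4 / η * (f (z 0) - f (z K)) := by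
  refine sum_norm_gradient_sq_le_of_biased_steps hf hsmooth hη hδ hηL hηδK hz fun k _ => ?_
  have := norm_gradient_sub_sub_le_of_norm_iteratedFDeriv_two_sub_le hf2 hh2 hsim (z k) (z 0)
  convert this using 2
  abel

end LocalRound

lemma step_size_bounds {L δ η : ℝ} {K : ℕ} (hL : 0 < L) (hδ : 0 ≤ δ) (hK : 1 ≤ K)
    (hη : if δ = 0 then η = 1 / L else η = min (1 / L) (1 / (192 * δ * K))) :
    0 < η ∧ η * L ≤ 1 ∧ K * (η * δ) ≤ 1 / 192 ∧ 1 / η ≤ L + 192 * δ * K := by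
  have hηM : η = (max L (192 * δ * K))⁻¹ := by
    split_ifs at hη with hδ0
    · simp [hη, hδ0, hL.le]
    · have hc : 0 < 192 * δ * K := by
        have : (0 : ℝ) < K := by exact_mod_cast hK
        have := lt_of_le_of_ne hδ (Ne.symm hδ0)
        positivity
      rcases le_total L (192 * δ * K) with h | h
      · rw [hη, max_eq_right h, min_eq_right (one_div_le_one_div_of_le hL h), one_div]
      · rw [hη, max_eq_left h, min_eq_left (one_div_le_one_div_of_le hc h), one_div]
  set M := max L (192 * δ * K)
  have hM : 0 < M := lt_max_of_lt_left hL
  subst hηM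
  refine ⟨inv_pos.2 hM, ?_, ?_, ?_⟩
  · rw [inv_mul_le_iff₀ hM, mul_one]
    exact le_max_left _ _
  · have := le_max_right L (192 * δ * K)
    field_simp
    linarith
  · rw [one_div, inv_inv]
    exact max_le_add_of_nonneg hL.le (by positivity)

lemma sum_Icc_one_sub' (g : ℕ → ℝ) (T : ℕ) :
    ∑ t ∈ Icc 1 T, (g (t - 1) - g t) = g 0 - g T := by
  induction T with
  | zero => simp
  | succ n ih => rw [sum_Icc_succ_top (by omega), ih, Nat.add_sub_cancel]; ring

theorem stmt_13_general {d : ℕ} (f h : EuclideanSpace ℝ (Fin d) → ℝ) (L δ fstar : ℝ)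
    (hL : 0 < L) (hδ : 0 ≤ δ)
    (hfd : Differentiable ℝ f)
    (hsmooth : ∀ x y : EuclideanSpace ℝ (Fin d),
      ‖gradient f x - gradient f y‖ ≤ L * ‖x - y‖)
    (hfbdd : ∀ x, fstar ≤ f x)
    (hf : ContDiff ℝ 2 f) (hh : ContDiff ℝ 2 h)
    (hsim : ∀ x, ‖iteratedFDeriv ℝ 2 f x - iteratedFDeriv ℝ 2 h x‖ ≤ δ)
    (K T : ℕ) (hK : 1 ≤ K)
    (η : ℝ)
    (hη : if δ = 0 then η = 1 / L else η = min (1 / L) (1 / (192 * δ * K)))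
    (x : ℕ → EuclideanSpace ℝ (Fin d))
    (y : ℕ → ℕ → EuclideanSpace ℝ (Fin d))
    (hy0 : ∀ t, 1 ≤ t → t ≤ T → y t 0 = x (t - 1))
    (hyk : ∀ t, 1 ≤ t → t ≤ T → ∀ k, 1 ≤ k → k ≤ K →
      y t k = y t (k - 1) - η • (gradient h (y t (k - 1))
        - gradient h (x (t - 1)) + gradient f (x (t - 1))))
    (hx : ∀ t, 1 ≤ t → t ≤ T → x t = y t K) :
    (1 / (K * T)) *
        ∑ t ∈ Finset.Icc 1 T, ∑ k ∈ Finset.range K, ‖gradient f (y t k)‖ ^ 2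
      ≤ 4 * (L + 192 * δ * K) * (f (x 0) - fstar) / (K * T) := by
  obtain ⟨hηpos, hηL, hηδK, hηinv⟩ := step_size_bounds hL hδ hK hη
  have hround : ∀ t ∈ Icc 1 T, ∑ k ∈ range K, ‖gradient f (y t k)‖ ^ 2
      ≤ 4 / η * (f (x (t - 1)) - f (x t)) := by
    intro t ht
    obtain ⟨ht1, htT⟩ := mem_Icc.1 ht
    have := sum_norm_gradient_sq_le_of_bias_corrected_steps (z := y t) hfd hsmooth hf hh hsim
      hηpos hδ hηL hηδK fun k hk => by
        rw [hy0 t ht1 htT]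
        simpa using hyk t ht1 htT (k + 1) (by omega) hk
    rwa [hy0 t ht1 htT, ← hx t ht1 htT] at this
  have htotal : ∑ t ∈ Icc 1 T, ∑ k ∈ range K, ‖gradient f (y t k)‖ ^ 2
      ≤ 4 * (L + 192 * δ * K) * (f (x 0) - fstar) :=
    calc _ ≤ ∑ t ∈ Icc 1 T, 4 / η * (f (x (t - 1)) - f (x t)) := sum_le_sum hround
      _ = 4 * (1 / η) * (f (x 0) - f (x T)) := by
          rw [← mul_sum, sum_Icc_one_sub' (fun t => f (x t))]; ring
      _ ≤ 4 * (1 / η) * (f (x 0) - fstar) := by gcongr; exact hfbdd (x T)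
      _ ≤ 4 * (L + 192 * δ * K) * (f (x 0) - fstar) := by
          gcongr
          exact sub_nonneg.2 (hfbdd (x 0))
  rw [one_div_mul_eq_div]
  exact div_le_div_of_nonneg_right htotal (by positivity)

/-- convergence of the exact bias-corrected (SVRG-like) local
update in the noiseless regime. When `δ = 0` the step size is `η = 1/L`,
encoded by taking `η = min (1/L) (1/(192δK))` with the convention that the
second argument is `1/0 = 0`... to stay faithful we state the choice of `η`
by cases on `δ`. -/
theorem stmt_13 {d : ℕ} (f h : EuclideanSpace ℝ (Fin d) → ℝ) (L δ fstar : ℝ)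
    (hL : 0 < L) (hδ : 0 ≤ δ)
    (hfd : Differentiable ℝ f)
    (hsmooth : ∀ x y : EuclideanSpace ℝ (Fin d),
      ‖gradient f x - gradient f y‖ ≤ L * ‖x - y‖)
    (hfbdd : ∀ x, fstar ≤ f x)
    (hf : ContDiff ℝ 2 f) (hh : ContDiff ℝ 2 h)
    (hsim : ∀ x, ‖iteratedFDeriv ℝ 2 f x - iteratedFDeriv ℝ 2 h x‖ ≤ δ)
    (K T : ℕ) (hK : 1 ≤ K) (hT : 1 ≤ T)
    (η : ℝ)
    (hη : if δ = 0 then η = 1 / L else η = min (1 / L) (1 / (192 * δ * K)))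
    (x : ℕ → EuclideanSpace ℝ (Fin d))
    (y : ℕ → ℕ → EuclideanSpace ℝ (Fin d))
    (hy0 : ∀ t, 1 ≤ t → t ≤ T → y t 0 = x (t - 1))
    (hyk : ∀ t, 1 ≤ t → t ≤ T → ∀ k, 1 ≤ k → k ≤ K →
      y t k = y t (k - 1) - η • (gradient h (y t (k - 1))
        - gradient h (x (t - 1)) + gradient f (x (t - 1))))
    (hx : ∀ t, 1 ≤ t → t ≤ T → x t = y t K) :
    (1 / (K * T)) *
        ∑ t ∈ Finset.Icc 1 T, ∑ k ∈ Finset.range K, ‖gradient f (y t k)‖ ^ 2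
      ≤ 4 * (L + 192 * δ * K) * (f (x 0) - fstar) / (K * T) :=
  stmt_13_general f h L δ fstar hL hδ hfd hsmooth hfbdd hf hh hsim K T hK η hη x y hy0 hyk hx
end
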